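/- arXiv:0907.5427 — 12 statements merged into one kernel-verified Lean document; each statement's English description precedes it below -/
import Mathlib

section
/- Let V be a finite set, let 𝒞 be a finite set of betweenness constraints over V, let κ be a real number, and suppose T ⊆ 𝒞 is a complete triple on some 3-element subset of V. Then there exists a bijection α : V → {1, …, |V|} with sat(α, 𝒞) ≥ |𝒞|/3 + κ if and only if there exists a bijection α′ : V → {1, …, |V|} with sat(α′, 𝒞 \ T) ≥ |𝒞 \ T|/3 + κ. -/
open scoped Classical

noncomputable section

/-- A betweenness constraint `(v, {x, y})`: a variable together with an unordered pair. -/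
abbrev Constraint (V : Type*) := V × Sym2 V

/-- The elements of a betweenness constraint are pairwise distinct. -/
def IsProperConstraint {V : Type*} (C : Constraint V) : Prop :=
  ∃ x y, C.2 = s(x, y) ∧ x ≠ y ∧ C.1 ≠ x ∧ C.1 ≠ y

/-- A bijection `α : V → {1, …, |V|}` satisfies the constraint `(v, {x, y})` if
`α x < α v < α y` or `α y < α v < α x`. -/
def Satisfies {V : Type*} [Fintype V] (α : V ≃ Fin (Fintype.card V)) (C : Constraint V) : Prop :=
  ∃ x y, C.2 = s(x, y) ∧ α x < α C.1 ∧ α C.1 < α y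

/-- The number of constraints of `𝒞` satisfied by `α`. -/
def satCount {V : Type*} [Fintype V] (α : V ≃ Fin (Fintype.card V))
    (𝒞 : Finset (Constraint V)) : ℕ :=
  (𝒞.filter fun C => Satisfies α C).card

/-- The complete triple of betweenness constraints on `{u, v, w}`. -/
def completeTriple {V : Type*} [DecidableEq V] (u v w : V) : Finset (Constraint V) :=
  {(u, s(v, w)), (v, s(u, w)), (w, s(u, v))}

/-- An instance is irreducible if it contains no complete triple. -/
def IrreducibleInstance {V : Type*} [DecidableEq V] (𝒞 : Finset (Constraint V)) : Prop :=
  ¬ ∃ u v w : V, u ≠ v ∧ u ≠ w ∧ v ≠ w ∧ completeTriple u v w ⊆ 𝒞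

/-- The weight `w(C, φ)` of a constraint `(vᵢ, {vⱼ, vₖ})` under `φ : V → {0,1,2,3}`. -/
def weight {V : Type*} (φ : V → Fin 4) (C : Constraint V) : ℝ :=
  if (C.2.map φ).IsDiag ∧ φ C.1 ∈ C.2.map φ then 0
  else if (C.2.map φ).IsDiag then -1/3
  else if φ C.1 ∈ C.2.map φ then 1/6
  else if ∃ x y : Fin 4, C.2.map φ = s(x, y) ∧ x < φ C.1 ∧ φ C.1 < y then 2/3
  else -1/3

/-- `α` is `φ`-compatible if `φ u < φ v` implies `α u < α v`. -/
def Compatible {V : Type*} [Fintype V] (φ : V → Fin 4)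
    (α : V ≃ Fin (Fintype.card V)) : Prop :=
  ∀ u v : V, φ u < φ v → α u < α v


lemma satisfies_pair {V : Type*} [Fintype V] (α : V ≃ Fin (Fintype.card V)) (a b c : V) :
    Satisfies α (a, s(b, c)) ↔ (α b < α a ∧ α a < α c) ∨ (α c < α a ∧ α a < α b) := by
  constructor
  · rintro ⟨x, y, hxy, h1, h2⟩
    rw [Sym2.eq_iff] at hxy
    rcases hxy with ⟨rfl, rfl⟩ | ⟨rfl, rfl⟩ <;> tauto
  · rintro (⟨h1, h2⟩ | ⟨h1, h2⟩)
    exacts [⟨b, c, rfl, h1, h2⟩, ⟨c, b, Sym2.eq_swap, h1, h2⟩]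

set_option linter.unreachableTactic false in
set_option linter.unusedTactic false in
lemma sat_triple {V : Type*} [Fintype V] [DecidableEq V] (α : V ≃ Fin (Fintype.card V))
    (u v w : V) (huv : u ≠ v) (huw : u ≠ w) (hvw : v ≠ w) :
    satCount α (completeTriple u v w) = 1 := by
  have hab : (α u).val ≠ (α v).val := fun h => huv (α.injective (Fin.val_injective h))
  have hac : (α u).val ≠ (α w).val := fun h => huw (α.injective (Fin.val_injective h))
  have hbc : (α v).val ≠ (α w).val := fun h => hvw (α.injective (Fin.val_injective h))
  have h1 : ((u, s(v, w)) : Constraint V) ≠ (v, s(u, w)) := by simp [huv]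
  have h2 : ((u, s(v, w)) : Constraint V) ≠ (w, s(u, v)) := by simp [huw]
  have h3 : ((v, s(u, w)) : Constraint V) ≠ (w, s(u, v)) := by simp [hvw]
  unfold satCount completeTriple
  rw [Finset.filter_insert, Finset.filter_insert, Finset.filter_singleton]
  simp only [satisfies_pair, Fin.lt_def]
  split_ifs <;>
    first
    | omega
    | (simp_all [Finset.card_insert_of_notMem, Finset.mem_insert, Finset.mem_singleton,
        h1, h2, h3] <;> omega)

lemma triple_card {V : Type*} [DecidableEq V] (u v w : V)
    (huv : u ≠ v) (huw : u ≠ w) (hvw : v ≠ w) : (completeTriple u v w).card = 3 := by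
  have h1 : ((u, s(v, w)) : Constraint V) ≠ (v, s(u, w)) := by simp [huv]
  have h2 : ((u, s(v, w)) : Constraint V) ≠ (w, s(u, v)) := by simp [huw]
  have h3 : ((v, s(u, w)) : Constraint V) ≠ (w, s(u, v)) := by simp [hvw]
  simp [completeTriple, Finset.card_insert_of_notMem, h1, h2, h3]

theorem remove_complete_triple_iff
    {V : Type*} [Fintype V] [DecidableEq V]
    (𝒞 T : Finset (Constraint V)) (h𝒞 : ∀ C ∈ 𝒞, IsProperConstraint C)
    (u v w : V) (huv : u ≠ v) (huw : u ≠ w) (hvw : v ≠ w)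
    (hT : T = completeTriple u v w) (hTsub : T ⊆ 𝒞) (κ : ℝ) :
    (∃ α : V ≃ Fin (Fintype.card V), (𝒞.card : ℝ) / 3 + κ ≤ satCount α 𝒞) ↔
    (∃ α : V ≃ Fin (Fintype.card V),
      ((𝒞 \ T).card : ℝ) / 3 + κ ≤ satCount α (𝒞 \ T)) := by
  subst hT
  have hTcard := triple_card u v w huv huw hvw
  have hsat : ∀ α : V ≃ Fin (Fintype.card V),
      satCount α 𝒞 = satCount α (𝒞 \ completeTriple u v w) + 1 := by
    intro α
    have h1 := sat_triple α u v w huv huw hvw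
    unfold satCount at *
    conv_lhs => rw [← Finset.sdiff_union_of_subset hTsub]
    rw [Finset.filter_union, Finset.card_union_of_disjoint
      (Finset.disjoint_filter_filter Finset.sdiff_disjoint), h1]
  have hle : 3 ≤ 𝒞.card := hTcard ▸ Finset.card_le_card hTsub
  have hn : (𝒞 \ completeTriple u v w).card + 3 = 𝒞.card := by
    rw [Finset.card_sdiff_of_subset hTsub, hTcard]; omega
  have hcard : (𝒞.card : ℝ) = ((𝒞 \ completeTriple u v w).card : ℝ) + 3 := by
    rw [← hn]; push_cast; ring
  constructor <;> rintro ⟨α, hα⟩ <;> refine ⟨α, ?_⟩ <;>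
    rw [hsat α] at * <;> push_cast at * <;> linarith


end
end

section
/- Let V be a finite set and 𝒞 = {C_1, …, C_m} a finite set of betweenness constraints over V. For every function φ : V → {0,1,2,3} there exists a φ-compatible bijection α : V → {1, …, |V|} satisfying at least m/3 + X(φ) constraints of 𝒞, where X(φ) = Σ_{p=1}^m w(C_p, φ). -/
open scoped Classical

noncomputable section

/-!
Average over all bijections `β : V ≃ Fin |V|` the bijection `colorSort φ β`, which lists `V` by
colour and breaks ties by `β`; it is `φ`-compatible. For a constraint `(v, {x, y})` the fraction
of `β` for which it is satisfied is `1/3` if all three colours agree (each of the three vertices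
is equally likely to be in the middle), `1/2` if `v` shares its colour with exactly one of `x, y`,
`1` if the colour of `v` lies strictly between the other two, and at least `0` otherwise. In every
case this is at least `1/3 + w`, so on average `colorSort φ β` satisfies at least `m/3 + X(φ)`
constraints, and some `β` does at least as well as the average.
-/

open Finset Function

lemma Finset.exists_sum_le_card_filter {B C : Type*} [Fintype B] [Nonempty B] (s : Finset C)
    (P : B → C → Prop) (f : C → ℝ) (hf : ∀ c ∈ s, Fintype.card B * f c ≤ #{b | P b c}) :
    ∃ b, ∑ c ∈ s, f c ≤ #{c ∈ s | P b c} := by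
  have hdouble : ∑ b, (#{c ∈ s | P b c} : ℝ) = ∑ c ∈ s, (#{b | P b c} : ℝ) := by
    exact_mod_cast sum_card_bipartiteAbove_eq_sum_card_bipartiteBelow (s := univ) (t := s) P
  obtain ⟨b, -, hb⟩ := exists_le_of_sum_le univ_nonempty <| calc
    ∑ _b : B, ∑ c ∈ s, f c = ∑ c ∈ s, Fintype.card B * f c := by
      rw [sum_const, card_univ, nsmul_eq_mul, mul_sum]
    _ ≤ ∑ c ∈ s, (#{b | P b c} : ℝ) := sum_le_sum hf
    _ = ∑ b, (#{c ∈ s | P b c} : ℝ) := hdouble.symm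
  exact ⟨b, hb⟩

lemma exists_mk_eq_lt_lt_iff_mem_uIoo {X K : Type*} [LinearOrder K] (f : X → K) (a b : X)
    (c : K) :
    (∃ p q, s(a, b) = s(p, q) ∧ f p < c ∧ c < f q) ↔ c ∈ Set.uIoo (f a) (f b) := by
  simp only [Sym2.eq_iff, Set.uIoo_eq_union, Set.mem_union, Set.mem_Ioo]
  constructor
  · rintro ⟨p, q, ⟨rfl, rfl⟩ | ⟨rfl, rfl⟩, h⟩
    · exact Or.inl h
    · exact Or.inr h
  · rintro (h | h)
    · exact ⟨a, b, Or.inl ⟨rfl, rfl⟩, h⟩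
    · exact ⟨b, a, Or.inr ⟨rfl, rfl⟩, h⟩

lemma mem_uIoo_indicator_sum_eq_one {ι : Type*} [LinearOrder ι] {a b c : ι}
    (hab : a ≠ b) (hac : a ≠ c) (hbc : b ≠ c) :
    ((if b ∈ Set.uIoo a c then 1 else 0) + (if a ∈ Set.uIoo b c then 1 else 0) +
      (if c ∈ Set.uIoo a b then 1 else 0) : ℕ) = 1 := by
  simp only [Set.uIoo, Set.mem_Ioo]
  rcases lt_or_gt_of_ne hab with h1 | h1 <;> rcases lt_or_gt_of_ne hac with h2 | h2 <;>
    rcases lt_or_gt_of_ne hbc with h3 | h3 <;>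
    simp [h1, h2, h3, h1.le, h2.le, h3.le, h1.not_gt, h2.not_gt, h3.not_gt] <;> order

def equivFinOfInjective {V L : Type*} [Fintype V] [LinearOrder L] (f : V → L) (hf : Injective f) :
    V ≃ Fin (Fintype.card V) :=
  (Equiv.ofInjective f hf).trans
    (Fintype.orderIsoFinOfCardEq _ (Set.card_range_of_injective hf)).symm.toEquiv

lemma equivFinOfInjective_lt_iff {V L : Type*} [Fintype V] [LinearOrder L] (f : V → L)
    (hf : Injective f) (u v : V) :
    equivFinOfInjective f hf u < equivFinOfInjective f hf v ↔ f u < f v :=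
  OrderIso.lt_iff_lt _

namespace Betweenness

variable {V ι K : Type*}

def colorKey (φ : V → K) (β : V ≃ ι) (v : V) : K ×ₗ ι := toLex (φ v, β v)

lemma colorKey_injective (φ : V → K) (β : V ≃ ι) : Injective (colorKey φ β) :=
  fun _ _ h => β.injective (congrArg Prod.snd (toLex.injective h))

variable [LinearOrder ι] [LinearOrder K]

lemma colorKey_lt_colorKey_iff (φ : V → K) (β : V ≃ ι) (u v : V) :
    colorKey φ β u < colorKey φ β v ↔ φ u < φ v ∨ φ u = φ v ∧ β u < β v :=
  Prod.Lex.toLex_lt_toLex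

lemma weight_mk (φ : V → Fin 4) (v x y : V) :
    weight φ (v, s(x, y)) =
      if φ x = φ y then (if φ v = φ x then 0 else -1/3)
      else if φ v = φ x ∨ φ v = φ y then 1/6
      else if φ v ∈ Set.uIoo (φ x) (φ y) then 2/3
      else -1/3 := by
  simp only [weight, Sym2.map_mk, Sym2.mk_isDiag_iff, Sym2.mem_iff,
    exists_mk_eq_lt_lt_iff_mem_uIoo (fun p : Fin 4 => p)]
  by_cases hc : φ x = φ y <;> simp [hc]

variable [Fintype V]

lemma satisfies_iff_mem_uIoo (α : V ≃ Fin (Fintype.card V)) (v x y : V) :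
    Satisfies α (v, s(x, y)) ↔ α v ∈ Set.uIoo (α x) (α y) :=
  exists_mk_eq_lt_lt_iff_mem_uIoo α x y (α v)

def colorSort (φ : V → K) (β : V ≃ ι) : V ≃ Fin (Fintype.card V) :=
  equivFinOfInjective (colorKey φ β) (colorKey_injective φ β)

lemma colorSort_lt_colorSort_iff (φ : V → K) (β : V ≃ ι) (u v : V) :
    colorSort φ β u < colorSort φ β v ↔ φ u < φ v ∨ φ u = φ v ∧ β u < β v :=
  (equivFinOfInjective_lt_iff _ _ u v).trans (colorKey_lt_colorKey_iff φ β u v)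

lemma compatible_colorSort (φ : V → Fin 4) (β : V ≃ ι) : Compatible φ (colorSort φ β) :=
  fun u v h => (colorSort_lt_colorSort_iff φ β u v).2 (Or.inl h)

lemma satisfies_colorSort_iff (φ : V → K) (β : V ≃ ι) (v x y : V) :
    Satisfies (colorSort φ β) (v, s(x, y)) ↔
      colorKey φ β v ∈ Set.uIoo (colorKey φ β x) (colorKey φ β y) := by
  simp only [satisfies_iff_mem_uIoo, Set.uIoo_eq_union, Set.mem_union, Set.mem_Ioo, colorSort,
    equivFinOfInjective_lt_iff]

lemma satisfies_colorSort_of_mem_uIoo (φ : V → K) (β : V ≃ ι) {v x y : V}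
    (h : φ v ∈ Set.uIoo (φ x) (φ y)) : Satisfies (colorSort φ β) (v, s(x, y)) := by
  simp only [satisfies_colorSort_iff, Set.uIoo_eq_union, Set.mem_union, Set.mem_Ioo,
    colorKey_lt_colorKey_iff] at h ⊢
  tauto

variable [Fintype ι]

lemma card_filter_swap_trans (a b : V) (p : (V ≃ ι) → Prop) [DecidablePred p] :
    #{β | p ((Equiv.swap a b).trans β)} = #{β | p β} := by
  refine card_equiv ((Equiv.swap a b).equivCongr (Equiv.refl ι)) fun β => ?_
  simp only [mem_filter, mem_univ, true_and]
  rfl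

lemma two_mul_card_filter_apply_lt {x y : V} (hxy : x ≠ y) :
    2 * #{β : V ≃ ι | β x < β y} = Fintype.card (V ≃ ι) := by
  have hswap : #{β : V ≃ ι | β y < β x} = #{β : V ≃ ι | β x < β y} := by
    simpa using card_filter_swap_trans x y fun β : V ≃ ι => β x < β y
  have hnot : #{β : V ≃ ι | ¬β x < β y} = #{β : V ≃ ι | β y < β x} := by
    congr 1
    exact filter_congr fun β _ => not_lt.trans (β.injective.ne hxy).symm.le_iff_lt
  have hsplit := card_filter_add_card_filter_not (s := univ) fun β : V ≃ ι => β x < β y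
  rw [card_univ, hnot, hswap] at hsplit
  omega

/-- Swapping `x` with `v`, resp. `v` with `y`, permutes the three events "`v` (resp. `x`, `y`) is
in the middle", and these events partition the bijections. -/
lemma three_mul_card_filter_mem_uIoo {x v y : V} (hxv : x ≠ v) (hxy : x ≠ y) (hvy : v ≠ y) :
    3 * #{β : V ≃ ι | β v ∈ Set.uIoo (β x) (β y)} = Fintype.card (V ≃ ι) := by
  have hx := card_filter_swap_trans x v fun β : V ≃ ι => β v ∈ Set.uIoo (β x) (β y)
  have hy := card_filter_swap_trans v y fun β : V ≃ ι => β v ∈ Set.uIoo (β x) (β y)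
  simp only [Equiv.trans_apply, Equiv.swap_apply_left, Equiv.swap_apply_right,
    Equiv.swap_apply_of_ne_of_ne hxy.symm hvy.symm, Equiv.swap_apply_of_ne_of_ne hxv hxy] at hx hy
  have hsum : #{β : V ≃ ι | β v ∈ Set.uIoo (β x) (β y)} +
      #{β : V ≃ ι | β x ∈ Set.uIoo (β v) (β y)} +
      #{β : V ≃ ι | β y ∈ Set.uIoo (β x) (β v)} = Fintype.card (V ≃ ι) := by
    simp only [card_filter, ← sum_add_distrib]
    rw [sum_congr rfl fun β _ => mem_uIoo_indicator_sum_eq_one (β.injective.ne hxv)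
      (β.injective.ne hxy) (β.injective.ne hvy), sum_const, card_univ, smul_eq_mul, mul_one]
  omega

lemma three_mul_card_satisfies_colorSort_of_eq {φ : V → K} {v x y : V}
    (hxy : x ≠ y) (hvx : v ≠ x) (hvy : v ≠ y) (hv : φ v = φ x) (hc : φ x = φ y) :
    3 * #{β : V ≃ ι | Satisfies (colorSort φ β) (v, s(x, y))} = Fintype.card (V ≃ ι) := by
  rw [← three_mul_card_filter_mem_uIoo hvx.symm hxy hvy]
  congr 2
  refine filter_congr fun β _ => ?_
  simp [satisfies_colorSort_iff, Set.uIoo_eq_union, colorKey_lt_colorKey_iff, hv, hc]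

lemma two_mul_card_satisfies_colorSort_of_eq_of_ne {φ : V → K} {v x y : V}
    (hvx : v ≠ x) (hv : φ v = φ x) (hc : φ x ≠ φ y) :
    2 * #{β : V ≃ ι | Satisfies (colorSort φ β) (v, s(x, y))} = Fintype.card (V ≃ ι) := by
  rcases hc.lt_or_gt with hc | hc <;>
    [rw [← two_mul_card_filter_apply_lt hvx.symm]; rw [← two_mul_card_filter_apply_lt hvx]] <;>
  · congr 2
    refine filter_congr fun β _ => ?_
    simp [satisfies_colorSort_iff, Set.uIoo_eq_union, colorKey_lt_colorKey_iff, hv, hc,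
      hc.not_gt, hc.ne']

lemma card_mul_one_third_add_weight_le (φ : V → Fin 4) {v x y : V}
    (hxy : x ≠ y) (hvx : v ≠ x) (hvy : v ≠ y) :
    (Fintype.card (V ≃ ι) : ℝ) * (1 / 3 + weight φ (v, s(x, y))) ≤
      #{β : V ≃ ι | Satisfies (colorSort φ β) (v, s(x, y))} := by
  rw [weight_mk]
  split_ifs with hc hv hv hv
  · rw [← three_mul_card_satisfies_colorSort_of_eq hxy hvx hvy hv hc]
    push_cast
    linarith
  · norm_num
  · have h : 2 * #{β : V ≃ ι | Satisfies (colorSort φ β) (v, s(x, y))} =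
        Fintype.card (V ≃ ι) := by
      rcases hv with hv | hv
      · exact two_mul_card_satisfies_colorSort_of_eq_of_ne hvx hv hc
      · rw [Sym2.eq_swap]
        exact two_mul_card_satisfies_colorSort_of_eq_of_ne hvy hv (Ne.symm hc)
    rw [← h]
    push_cast
    linarith
  · rw [filter_true_of_mem fun β _ => satisfies_colorSort_of_mem_uIoo φ β hv, card_univ]
    linarith
  · norm_num

end Betweenness

open Betweenness in
theorem exists_compatible_bijection_above_expectation_general
    {V : Type*} [Fintype V]
    (𝒞 : Finset (Constraint V)) (m : ℕ) (hm : 𝒞.card = m)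
    (h𝒞 : ∀ C ∈ 𝒞, IsProperConstraint C) (φ : V → Fin 4) :
    ∃ α : V ≃ Fin (Fintype.card V), Compatible φ α ∧
      (m : ℝ) / 3 + ∑ C ∈ 𝒞, weight φ C ≤ satCount α 𝒞 := by
  have : Nonempty (V ≃ Fin (Fintype.card V)) := ⟨Fintype.equivFin V⟩
  obtain ⟨β, hβ⟩ := exists_sum_le_card_filter 𝒞
    (fun (β : V ≃ Fin (Fintype.card V)) C => Satisfies (colorSort φ β) C)
    (fun C => 1 / 3 + weight φ C) fun C hC => by
      obtain ⟨x, y, hpair, hxy, hvx, hvy⟩ := h𝒞 C hC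
      obtain ⟨v, _⟩ := C
      subst hpair
      exact card_mul_one_third_add_weight_le φ hxy hvx hvy
  refine ⟨colorSort φ β, compatible_colorSort φ β, ?_⟩
  rw [← hm, satCount]
  simpa [sum_add_distrib, div_eq_mul_inv] using hβ

theorem exists_compatible_bijection_above_expectation
    {V : Type*} [Fintype V] [DecidableEq V]
    (𝒞 : Finset (Constraint V)) (m : ℕ) (hm : 𝒞.card = m)
    (h𝒞 : ∀ C ∈ 𝒞, IsProperConstraint C) (φ : V → Fin 4) :
    ∃ α : V ≃ Fin (Fintype.card V), Compatible φ α ∧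
      (m : ℝ) / 3 + ∑ C ∈ 𝒞, weight φ C ≤ satCount α 𝒞 :=
  exists_compatible_bijection_above_expectation_general 𝒞 m hm h𝒞 φ
end
end

section
/- Let V be a finite set, let (v_i, {v_j, v_k}) be a betweenness constraint over V, and let φ : V → {0,1,2,3}. If either φ(v_j) = φ(v_k) ≠ φ(v_i), or φ(v_i), φ(v_j), φ(v_k) are pairwise distinct and φ(v_i) does not lie strictly between φ(v_j) and φ(v_k), then no φ-compatible bijection α : V → {1, …, |V|} satisfies the constraint (v_i, {v_j, v_k}). -/
open scoped Classical

noncomputable section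

theorem compatible_not_satisfies
    {V : Type*} [Fintype V] [DecidableEq V] (vi vj vk : V)
    (hij : vi ≠ vj) (hik : vi ≠ vk) (hjk : vj ≠ vk)
    (φ : V → Fin 4)
    (h : (φ vj = φ vk ∧ φ vi ≠ φ vj) ∨
         (φ vi ≠ φ vj ∧ φ vi ≠ φ vk ∧ φ vj ≠ φ vk ∧
           ¬ ((φ vj < φ vi ∧ φ vi < φ vk) ∨ (φ vk < φ vi ∧ φ vi < φ vj))))
    (α : V ≃ Fin (Fintype.card V)) (hα : Compatible φ α) :
    ¬ Satisfies α (vi, s(vj, vk)) := by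
  rintro ⟨x, y, hxy, h1, h2⟩
  have key : ∀ u v : V, α u < α v → φ u ≤ φ v := by
    intro u v huv
    by_contra hlt
    exact absurd (hα v u (lt_of_not_ge hlt)) (not_lt.mpr huv.le)
  have hx : φ x ≤ φ vi := key _ _ h1
  have hy : φ vi ≤ φ y := key _ _ h2
  have hpair : (x = vj ∧ y = vk) ∨ (x = vk ∧ y = vj) := by
    have := (Sym2.eq_iff).mp hxy.symm
    tauto
  rcases h with ⟨hjk', hij'⟩ | ⟨hij', hik', hjk', hbet⟩
  · rcases hpair with ⟨rfl, rfl⟩ | ⟨rfl, rfl⟩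
    · exact hij' (le_antisymm (hjk' ▸ hy) hx)
    · exact hij' (le_antisymm hy (hjk' ▸ hx))
  · rcases hpair with ⟨rfl, rfl⟩ | ⟨rfl, rfl⟩
    · exact hbet (Or.inl ⟨lt_of_le_of_ne hx (Ne.symm hij'), lt_of_le_of_ne hy hik'⟩)
    · exact hbet (Or.inr ⟨lt_of_le_of_ne hx (Ne.symm hik'), lt_of_le_of_ne hy hij'⟩)

end
end

section
/- Let V be a finite set, let (v_i, {v_j, v_k}) be a betweenness constraint over V, and let φ : V → {0,1,2,3} satisfy φ(v_i) = φ(v_j) = φ(v_k). Then the number of φ-compatible bijections α : V → {1, …, |V|} that satisfy the constraint (v_i, {v_j, v_k}) equals exactly one third of the total number of φ-compatible bijections. -/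
open scoped Classical

noncomputable section

def Btw3 {n : ℕ} (a b c : Fin n) : Prop := (b < a ∧ a < c) ∨ (c < a ∧ a < b)

lemma sat_iff {V : Type*} [Fintype V] (α : V ≃ Fin (Fintype.card V)) (v x y : V) :
    Satisfies α (v, s(x, y)) ↔ Btw3 (α v) (α x) (α y) := by
  constructor
  · rintro ⟨a, b, hab, h1, h2⟩
    rw [Sym2.eq_iff] at hab
    rcases hab with ⟨rfl, rfl⟩ | ⟨rfl, rfl⟩
    · exact Or.inl ⟨h1, h2⟩
    · exact Or.inr ⟨h1, h2⟩
  · rintro (⟨h1, h2⟩ | ⟨h1, h2⟩)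
    · exact ⟨x, y, rfl, h1, h2⟩
    · exact ⟨y, x, Sym2.eq_swap, h1, h2⟩

theorem compatible_satisfying_count_all_equal
    {V : Type*} [Fintype V] [DecidableEq V] (vi vj vk : V)
    (hij : vi ≠ vj) (hik : vi ≠ vk) (hjk : vj ≠ vk)
    (φ : V → Fin 4) (h1 : φ vi = φ vj) (h2 : φ vj = φ vk) :
    3 * ((Finset.univ : Finset (V ≃ Fin (Fintype.card V))).filter
        (fun α => Compatible φ α ∧ Satisfies α (vi, s(vj, vk)))).card
      = ((Finset.univ : Finset (V ≃ Fin (Fintype.card V))).filter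
        (fun α => Compatible φ α)).card := by
  classical
  set n := Fintype.card V with hn
  set c : Equiv.Perm V := (Equiv.swap vi vj).trans (Equiv.swap vi vk) with hcdef
  have hc1 : c vi = vj := by
    simp [hcdef, Equiv.swap_apply_of_ne_of_ne hij.symm hjk]
  have hc2 : c vj = vk := by
    simp [hcdef, Equiv.swap_apply_of_ne_of_ne]
  have hc3 : c vk = vi := by
    simp [hcdef, Equiv.swap_apply_of_ne_of_ne hik.symm hjk.symm]
  have hφ3 : φ vi = φ vk := h1.trans h2
  have hφc : ∀ u, φ (c u) = φ u := by
    intro u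
    by_cases hu1 : u = vi
    · rw [hu1, hc1, h1]
    by_cases hu2 : u = vj
    · rw [hu2, hc2, h2]
    by_cases hu3 : u = vk
    · rw [hu3, hc3, hφ3]
    · rw [show c u = u by
        simp [hcdef, Equiv.swap_apply_of_ne_of_ne hu1 hu2,
          Equiv.swap_apply_of_ne_of_ne hu1 hu3]]
  have compat_trans : ∀ (σ : Equiv.Perm V), (∀ u, φ (σ u) = φ u) →
      ∀ α : V ≃ Fin n, Compatible φ α → Compatible φ (σ.trans α) := by
    intro σ hσ α hα u v huv
    exact hα _ _ (by rwa [hσ, hσ] : φ (σ u) < φ (σ v))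
  have compat_iff : ∀ (σ : Equiv.Perm V), (∀ u, φ (σ u) = φ u) →
      ∀ α : V ≃ Fin n, (Compatible φ α ↔ Compatible φ (σ.trans α)) := by
    intro σ hσ α
    have hσs : ∀ u, φ (σ.symm u) = φ u := by
      intro u; conv_rhs => rw [← σ.apply_symm_apply u, hσ]
    refine ⟨compat_trans σ hσ α, fun h => ?_⟩
    have h' := compat_trans σ.symm hσs _ h
    rwa [show σ.symm.trans (σ.trans α) = α from by ext u; simp] at h'
  have hφcs : ∀ u, φ (c.symm u) = φ u := by
    intro u; conv_rhs => rw [← c.apply_symm_apply u, hφc]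
  -- the three middle-element sets
  set S1 : Finset (V ≃ Fin n) := Finset.univ.filter
    (fun α => Compatible φ α ∧ Btw3 (α vi) (α vj) (α vk)) with hS1
  set S2 : Finset (V ≃ Fin n) := Finset.univ.filter
    (fun α => Compatible φ α ∧ Btw3 (α vj) (α vi) (α vk)) with hS2
  set S3 : Finset (V ≃ Fin n) := Finset.univ.filter
    (fun α => Compatible φ α ∧ Btw3 (α vk) (α vi) (α vj)) with hS3
  -- generic card bijection
  have card_eq : ∀ σ : Equiv.Perm V, ∀ s t : Finset (V ≃ Fin n),
      (∀ α, α ∈ s ↔ σ.trans α ∈ t) → s.card = t.card := by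
    intro σ s t h
    refine Finset.card_bij' (fun a _ => σ.trans a) (fun b _ => σ.symm.trans b) ?_ ?_ ?_ ?_
    · intro a ha; exact (h a).mp ha
    · intro b hb
      have : σ.trans (σ.symm.trans b) = b := by ext u; simp
      rw [h (σ.symm.trans b), this]; exact hb
    · intro a _; ext u; simp
    · intro b _; ext u; simp
  have e21 : S2.card = S1.card := by
    apply card_eq c
    intro α
    simp only [hS1, hS2, Finset.mem_filter, Finset.mem_univ, true_and]
    rw [← compat_iff c hφc α]
    have : ∀ u, (c.trans α) u = α (c u) := fun u => rfl
    rw [this vi, this vj, this vk, hc1, hc2, hc3]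
    unfold Btw3; tauto
  have e31 : S3.card = S1.card := by
    apply card_eq c.symm
    intro α
    simp only [hS1, hS3, Finset.mem_filter, Finset.mem_univ, true_and]
    rw [← compat_iff c.symm hφcs α]
    have hs1 : c.symm vi = vk := by rw [← hc3, Equiv.symm_apply_apply]
    have hs2 : c.symm vj = vi := by rw [← hc1, Equiv.symm_apply_apply]
    have hs3 : c.symm vk = vj := by rw [← hc2, Equiv.symm_apply_apply]
    have : ∀ u, (c.symm.trans α) u = α (c.symm u) := fun u => rfl
    rw [this vi, this vj, this vk, hs1, hs2, hs3]

  -- trichotomy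
  have tri : ∀ α : V ≃ Fin n,
      (Btw3 (α vi) (α vj) (α vk) ∨ Btw3 (α vj) (α vi) (α vk) ∨ Btw3 (α vk) (α vi) (α vj))
      ∧ ¬ (Btw3 (α vi) (α vj) (α vk) ∧ Btw3 (α vj) (α vi) (α vk))
      ∧ ¬ (Btw3 (α vi) (α vj) (α vk) ∧ Btw3 (α vk) (α vi) (α vj))
      ∧ ¬ (Btw3 (α vj) (α vi) (α vk) ∧ Btw3 (α vk) (α vi) (α vj)) := by
    intro α
    have d1 : (α vi : ℕ) ≠ (α vj : ℕ) := by
      simpa [Fin.val_eq_val] using α.injective.ne hij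
    have d2 : (α vi : ℕ) ≠ (α vk : ℕ) := by
      simpa [Fin.val_eq_val] using α.injective.ne hik
    have d3 : (α vj : ℕ) ≠ (α vk : ℕ) := by
      simpa [Fin.val_eq_val] using α.injective.ne hjk
    unfold Btw3
    simp only [Fin.lt_def]
    omega
  have hdisj12 : Disjoint S1 S2 := by
    rw [Finset.disjoint_left]
    intro α hα1 hα2
    simp only [hS1, hS2, Finset.mem_filter] at hα1 hα2
    exact (tri α).2.1 ⟨hα1.2.2, hα2.2.2⟩
  have hdisj13 : Disjoint S1 S3 := by
    rw [Finset.disjoint_left]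
    intro α hα1 hα3
    simp only [hS1, hS3, Finset.mem_filter] at hα1 hα3
    exact (tri α).2.2.1 ⟨hα1.2.2, hα3.2.2⟩
  have hdisj23 : Disjoint S2 S3 := by
    rw [Finset.disjoint_left]
    intro α hα2 hα3
    simp only [hS2, hS3, Finset.mem_filter] at hα2 hα3
    exact (tri α).2.2.2 ⟨hα2.2.2, hα3.2.2⟩
  have hunion : S1 ∪ S2 ∪ S3 = Finset.univ.filter (fun α => Compatible φ α) := by
    ext α
    simp only [hS1, hS2, hS3, Finset.mem_union, Finset.mem_filter, Finset.mem_univ, true_and]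
    constructor
    · rintro ((⟨h, _⟩ | ⟨h, _⟩) | ⟨h, _⟩) <;> exact h
    · intro h
      rcases (tri α).1 with ht | ht | ht
      · exact Or.inl (Or.inl ⟨h, ht⟩)
      · exact Or.inl (Or.inr ⟨h, ht⟩)
      · exact Or.inr ⟨h, ht⟩
  have hfilter : Finset.univ.filter
      (fun α : V ≃ Fin n => Compatible φ α ∧ Satisfies α (vi, s(vj, vk))) = S1 := by
    ext α
    simp only [hS1, Finset.mem_filter, sat_iff]
  rw [hfilter, ← hunion,
    Finset.card_union_of_disjoint (by
      rw [Finset.disjoint_union_left]; exact ⟨hdisj13, hdisj23⟩),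
    Finset.card_union_of_disjoint hdisj12, e21, e31]
  ring


end
end

section
/- Let V be a finite set, let (v_i, {v_j, v_k}) be a betweenness constraint over V, and let φ : V → {0,1,2,3} satisfy φ(v_j) ≠ φ(v_k) and φ(v_i) ∈ {φ(v_j), φ(v_k)}. Then the number of φ-compatible bijections α : V → {1, …, |V|} that satisfy the constraint (v_i, {v_j, v_k}) equals exactly one half of the total number of φ-compatible bijections. -/
open scoped Classical

noncomputable section

lemma sat_iff_aux {V : Type*} [Fintype V] (vi vj vk : V)
    (hij : vi ≠ vj) (φ : V → Fin 4) (h1 : φ vj ≠ φ vk) (h2 : φ vi = φ vj)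
    (α : V ≃ Fin (Fintype.card V)) (hc : Compatible φ α) :
    Satisfies α (vi, s(vj, vk)) ↔ ((φ vj < φ vk) ↔ α vj < α vi) := by
  constructor
  · rintro ⟨x, y, hxy, h3, h4⟩
    simp only [Sym2.eq_iff] at hxy
    rcases hxy with ⟨rfl, rfl⟩ | ⟨rfl, rfl⟩
    · simp only [h3, iff_true]
      by_contra h
      have h' : φ vk < φ vj := lt_of_le_of_ne (not_lt.1 h) h1.symm
      exact absurd (hc vk vj h') (asymm (h3.trans h4))
    · constructor
      · intro hφ
        exact absurd (hc vi vk (h2 ▸ hφ)) (asymm h3)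
      · intro hα
        exact absurd hα (asymm h4)
  · intro h
    rcases lt_or_gt_of_ne h1 with hlt | hgt
    · exact ⟨vj, vk, rfl, h.mp hlt, hc vi vk (h2 ▸ hlt)⟩
    · have hne : α vi ≠ α vj := fun e => hij (α.injective e)
      have hvi : α vi < α vj :=
        lt_of_le_of_ne (not_lt.1 fun hh => asymm hgt (h.mpr hh)) hne
      exact ⟨vk, vj, Sym2.eq_swap, hc vk vi (h2 ▸ hgt), hvi⟩

lemma count_aux {V : Type*} [Fintype V] [DecidableEq V] (vi vj vk : V)
    (hij : vi ≠ vj) (hik : vi ≠ vk) (hjk : vj ≠ vk)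
    (φ : V → Fin 4) (h1 : φ vj ≠ φ vk) (h2 : φ vi = φ vj) :
    2 * ((Finset.univ : Finset (V ≃ Fin (Fintype.card V))).filter
        (fun α => Compatible φ α ∧ Satisfies α (vi, s(vj, vk)))).card
      = ((Finset.univ : Finset (V ≃ Fin (Fintype.card V))).filter
        (fun α => Compatible φ α)).card := by
  classical
  set F : (V ≃ Fin (Fintype.card V)) → (V ≃ Fin (Fintype.card V)) :=
    fun α => (Equiv.swap vi vj).trans α with hF
  have hφσ : ∀ u, φ (Equiv.swap vi vj u) = φ u := by
    intro u
    rcases eq_or_ne u vi with rfl | h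
    · simp [Equiv.swap_apply_left, h2]
    rcases eq_or_ne u vj with rfl | h'
    · simp [Equiv.swap_apply_right, h2]
    · simp [Equiv.swap_apply_of_ne_of_ne h h']
  have hFcomp : ∀ α, Compatible φ α → Compatible φ (F α) := by
    intro α hα u v huv
    exact hα _ _ (by rwa [hφσ, hφσ])
  have hFF : ∀ α, F (F α) = α := by
    intro α; ext x; simp [hF]
  have hFsat : ∀ α, Compatible φ α →
      (Satisfies (F α) (vi, s(vj, vk)) ↔ ¬ Satisfies α (vi, s(vj, vk))) := by
    intro α hα
    rw [sat_iff_aux vi vj vk hij φ h1 h2 (F α) (hFcomp α hα),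
        sat_iff_aux vi vj vk hij φ h1 h2 α hα]
    have hne : α vi ≠ α vj := fun e => hij (α.injective e)
    simp only [hF, Equiv.trans_apply, Equiv.swap_apply_left, Equiv.swap_apply_right]
    rcases lt_or_gt_of_ne hne with h | h
    · simp [h, h.asymm]
    · simp [h, h.asymm]
  have hcard : ((Finset.univ : Finset (V ≃ Fin (Fintype.card V))).filter
        (fun α => Compatible φ α ∧ Satisfies α (vi, s(vj, vk)))).card
      = ((Finset.univ : Finset (V ≃ Fin (Fintype.card V))).filter
        (fun α => Compatible φ α ∧ ¬ Satisfies α (vi, s(vj, vk)))).card := by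
    apply Finset.card_bij' (fun α _ => F α) (fun α _ => F α)
    · intro α hα
      simp only [Finset.mem_filter, Finset.mem_univ, true_and] at hα ⊢
      exact ⟨hFcomp α hα.1, fun hs => (hFsat α hα.1).mp hs hα.2⟩
    · intro α hα
      simp only [Finset.mem_filter, Finset.mem_univ, true_and] at hα ⊢
      exact ⟨hFcomp α hα.1, (hFsat α hα.1).mpr hα.2⟩
    · intro α _; exact hFF α
    · intro α _; exact hFF α
  have hsplit : ((Finset.univ : Finset (V ≃ Fin (Fintype.card V))).filter
        (fun α => Compatible φ α ∧ Satisfies α (vi, s(vj, vk)))).card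
      + ((Finset.univ : Finset (V ≃ Fin (Fintype.card V))).filter
        (fun α => Compatible φ α ∧ ¬ Satisfies α (vi, s(vj, vk)))).card
      = ((Finset.univ : Finset (V ≃ Fin (Fintype.card V))).filter
        (fun α => Compatible φ α)).card := by
    rw [← Finset.filter_filter, ← Finset.filter_filter,
      Finset.card_filter_add_card_filter_not]
  omega

theorem compatible_satisfying_count_half
    {V : Type*} [Fintype V] [DecidableEq V] (vi vj vk : V)
    (hij : vi ≠ vj) (hik : vi ≠ vk) (hjk : vj ≠ vk)
    (φ : V → Fin 4) (h1 : φ vj ≠ φ vk) (h2 : φ vi = φ vj ∨ φ vi = φ vk) :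
    2 * ((Finset.univ : Finset (V ≃ Fin (Fintype.card V))).filter
        (fun α => Compatible φ α ∧ Satisfies α (vi, s(vj, vk)))).card
      = ((Finset.univ : Finset (V ≃ Fin (Fintype.card V))).filter
        (fun α => Compatible φ α)).card := by
  rcases h2 with h2 | h2
  · exact count_aux vi vj vk hij hik hjk φ h1 h2
  · rw [show s(vj, vk) = s(vk, vj) from Sym2.eq_swap]
    exact count_aux vi vk vj hik hij hjk.symm φ h1.symm h2

end
end

section
/- Let V be a finite set and let (v_i, {v_j, v_k}) be a betweenness constraint over V. Then the expectation of the weight w((v_i,{v_j,v_k}), φ), taken over φ chosen uniformly at random from the 4^{|V|} functions V → {0,1,2,3}, equals 0. Consequently, for any finite set 𝒞 of betweenness constraints over V, the expectation of X(φ) = Σ_{C ∈ 𝒞} w(C, φ) over uniformly random φ equals 0. -/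
open scoped Classical

noncomputable section

set_option linter.unusedSectionVars false

def w3 (a b c : Fin 4) : ℝ :=
  if b = c ∧ (a = b ∨ a = c) then 0
  else if b = c then -1/3
  else if a = b ∨ a = c then 1/6
  else if (b < a ∧ a < c) ∨ (c < a ∧ a < b) then 2/3
  else -1/3

lemma my_exists_iff (a b c : Fin 4) :
    (∃ x y : Fin 4, s(b, c) = s(x, y) ∧ x < a ∧ a < y) ↔
      (b < a ∧ a < c) ∨ (c < a ∧ a < b) := by
  constructor
  · rintro ⟨x, y, hxy, h1, h2⟩
    rw [Sym2.eq_iff] at hxy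
    rcases hxy with ⟨rfl, rfl⟩ | ⟨rfl, rfl⟩
    · exact Or.inl ⟨h1, h2⟩
    · exact Or.inr ⟨h1, h2⟩
  · rintro (⟨h1, h2⟩ | ⟨h1, h2⟩)
    · exact ⟨b, c, rfl, h1, h2⟩
    · exact ⟨c, b, Sym2.eq_swap, h1, h2⟩

lemma weight_eq {V : Type*} (φ : V → Fin 4) (v x y : V) :
    weight φ (v, s(x, y)) = w3 (φ v) (φ x) (φ y) := by
  simp only [weight, w3, Sym2.map_pair_eq, Sym2.mk_isDiag_iff, Sym2.mem_iff, my_exists_iff]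

lemma sum_w3 : ∑ t : Fin 4 × Fin 4 × Fin 4, w3 t.1 t.2.1 t.2.2 = 0 := by
  rw [Fintype.sum_prod_type]
  simp only [Fintype.sum_prod_type]
  simp (config := { decide := true }) only [Fin.sum_univ_four, w3]
  norm_num

section Main
variable {V : Type*} [Fintype V] [DecidableEq V] (vi vj vk : V)

def u3 (a b c : Fin 4) (φ : V → Fin 4) : V → Fin 4 :=
  Function.update (Function.update (Function.update φ vi a) vj b) vk c

variable (hij : vi ≠ vj) (hik : vi ≠ vk) (hjk : vj ≠ vk)
include hij hik hjk

lemma u3_spec (a b c : Fin 4) (φ : V → Fin 4) :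
    (fun ψ : V → Fin 4 => (ψ vi, ψ vj, ψ vk)) (u3 vi vj vk a b c φ) = (a, b, c) := by
  simp [u3, Function.update_apply, hij, hik, hjk, (hij.symm : vj ≠ vi), (hik.symm : vk ≠ vi),
    (hjk.symm : vk ≠ vj)]

lemma u3_u3 (a b c a' b' c' : Fin 4) (φ : V → Fin 4) :
    u3 vi vj vk a b c (u3 vi vj vk a' b' c' φ) = u3 vi vj vk a b c φ := by
  funext x
  by_cases hx1 : x = vk
  · subst hx1; simp [u3]
  by_cases hx2 : x = vj
  · subst hx2; simp [u3, Function.update_apply, hjk]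
  by_cases hx3 : x = vi
  · subst hx3; simp [u3, Function.update_apply, hij, hik]
  · simp [u3, Function.update_apply, hx1, hx2, hx3]

lemma u3_self (a b c : Fin 4) (φ : V → Fin 4)
    (h : φ vi = a ∧ φ vj = b ∧ φ vk = c) : u3 vi vj vk a b c φ = φ := by
  funext x
  by_cases hx1 : x = vk
  · subst hx1; simp [u3, h.2.2]
  by_cases hx2 : x = vj
  · subst hx2; simp [u3, Function.update_apply, hjk, h.2.1]
  by_cases hx3 : x = vi
  · subst hx3; simp [u3, Function.update_apply, hij, hik, h.1]
  · simp [u3, Function.update_apply, hx1, hx2, hx3]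

def fiberEquiv (t s : Fin 4 × Fin 4 × Fin 4) :
    {φ : V → Fin 4 // (fun ψ : V → Fin 4 => (ψ vi, ψ vj, ψ vk)) φ = t} ≃
    {φ : V → Fin 4 // (fun ψ : V → Fin 4 => (ψ vi, ψ vj, ψ vk)) φ = s} where
  toFun x := ⟨u3 vi vj vk s.1 s.2.1 s.2.2 x.1, u3_spec vi vj vk hij hik hjk _ _ _ _⟩
  invFun x := ⟨u3 vi vj vk t.1 t.2.1 t.2.2 x.1, u3_spec vi vj vk hij hik hjk _ _ _ _⟩
  left_inv x := by
    have h := x.2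
    simp only [Prod.ext_iff] at h
    ext1
    simp only
    rw [u3_u3 vi vj vk hij hik hjk, u3_self vi vj vk hij hik hjk _ _ _ _ ⟨h.1, h.2⟩]
  right_inv x := by
    have h := x.2
    simp only [Prod.ext_iff] at h
    ext1
    simp only
    rw [u3_u3 vi vj vk hij hik hjk, u3_self vi vj vk hij hik hjk _ _ _ _ ⟨h.1, h.2⟩]

lemma sum_weight_zero : ∑ φ : V → Fin 4, weight φ (vi, s(vj, vk)) = 0 := by
  have key : ∑ φ : V → Fin 4, w3 (φ vi) (φ vj) (φ vk) = 0 := by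
    rw [← Fintype.sum_fiberwise (fun ψ : V → Fin 4 => (ψ vi, ψ vj, ψ vk))
      (fun φ => w3 (φ vi) (φ vj) (φ vk))]
    have h0 : ∀ t : Fin 4 × Fin 4 × Fin 4,
        (∑ φ : {φ : V → Fin 4 // (fun ψ : V → Fin 4 => (ψ vi, ψ vj, ψ vk)) φ = t},
          w3 (φ.1 vi) (φ.1 vj) (φ.1 vk)) =
        (Fintype.card {φ : V → Fin 4 //
          (fun ψ : V → Fin 4 => (ψ vi, ψ vj, ψ vk)) φ = (0, 0, 0)} : ℝ) * w3 t.1 t.2.1 t.2.2 := by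
      intro t
      have hc : Fintype.card {φ : V → Fin 4 //
          (fun ψ : V → Fin 4 => (ψ vi, ψ vj, ψ vk)) φ = t} =
          Fintype.card {φ : V → Fin 4 //
          (fun ψ : V → Fin 4 => (ψ vi, ψ vj, ψ vk)) φ = (0, 0, 0)} :=
        Fintype.card_congr (fiberEquiv vi vj vk hij hik hjk t (0, 0, 0))
      rw [← hc]
      rw [Finset.sum_congr rfl (fun φ _ => ?_), Finset.sum_const, Finset.card_univ,
        nsmul_eq_mul]
      have h := φ.2
      simp only [Prod.ext_iff] at h
      rw [h.1, h.2.1, h.2.2]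
    rw [Finset.sum_congr rfl (fun t _ => h0 t), ← Finset.mul_sum, sum_w3, mul_zero]
  calc ∑ φ : V → Fin 4, weight φ (vi, s(vj, vk))
      = ∑ φ : V → Fin 4, w3 (φ vi) (φ vj) (φ vk) :=
        Finset.sum_congr rfl fun φ _ => weight_eq φ vi vj vk
    _ = 0 := key

end Main

theorem expectation_weight_eq_zero
    {V : Type*} [Fintype V] [DecidableEq V] (vi vj vk : V)
    (hij : vi ≠ vj) (hik : vi ≠ vk) (hjk : vj ≠ vk) :
    (∑ φ : V → Fin 4, weight φ (vi, s(vj, vk))) / 4 ^ Fintype.card V = 0 ∧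
    ∀ 𝒞 : Finset (Constraint V), (∀ C ∈ 𝒞, IsProperConstraint C) →
      (∑ φ : V → Fin 4, ∑ C ∈ 𝒞, weight φ C) / 4 ^ Fintype.card V = 0 := by
  constructor
  · rw [sum_weight_zero vi vj vk hij hik hjk, zero_div]
  · intro 𝒞 h𝒞
    rw [Finset.sum_comm]
    have h0 : ∀ C ∈ 𝒞, ∑ φ : V → Fin 4, weight φ C = 0 := by
      intro C hC
      obtain ⟨x, y, h2, hxy, hvx, hvy⟩ := h𝒞 C hC
      have hC' : C = (C.1, s(x, y)) := by rw [← h2]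
      rw [Finset.sum_congr rfl (fun φ _ => by rw [hC'])]
      exact sum_weight_zero C.1 x y hvx hvy hxy
    rw [Finset.sum_congr rfl h0, Finset.sum_const, smul_zero, zero_div]

end
end

section
/- Let V be a finite set and 𝒞 a finite set of betweenness constraints over V. Encode each φ : V → {0,1,2,3} by the vector ε(φ) ∈ {−1,1}^{V × {1,2}} given by ε(φ)(v,1) = −1 if φ(v) ∈ {0,1} and ε(φ)(v,1) = 1 otherwise, and ε(φ)(v,2) = −1 if φ(v) ∈ {0,2} and ε(φ)(v,2) = 1 otherwise. Then there exists a real multivariate polynomial f in the variables indexed by V × {1,2}, of total degree at most 6, such that X(φ) = f(ε(φ)) for every φ : V → {0,1,2,3}, where X(φ) = Σ_{C ∈ 𝒞} w(C, φ). -/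
open scoped Classical

noncomputable section

/-- The encoding of `φ : V → {0,1,2,3}` by a sign vector in `{-1,1}^(V × {1,2})`. -/
def epsVec {V : Type*} (φ : V → Fin 4) : V × Fin 2 → ℝ := fun p =>
  if p.2 = 0 then (if (φ p.1 : ℕ) = 0 ∨ (φ p.1 : ℕ) = 1 then -1 else 1)
  else (if (φ p.1 : ℕ) = 0 ∨ (φ p.1 : ℕ) = 2 then -1 else 1)

/-- First sign coordinate of a value in `Fin 4`. -/
def e0 (a : Fin 4) : ℝ := if (a : ℕ) = 0 ∨ (a : ℕ) = 1 then -1 else 1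

/-- Second sign coordinate of a value in `Fin 4`. -/
def e1 (a : Fin 4) : ℝ := if (a : ℕ) = 0 ∨ (a : ℕ) = 2 then -1 else 1

lemma epsVec_fst {V : Type*} (φ : V → Fin 4) (v : V) :
    epsVec φ (v, 0) = e0 (φ v) := by simp [epsVec, e0]

lemma epsVec_snd {V : Type*} (φ : V → Fin 4) (v : V) :
    epsVec φ (v, 1) = e1 (φ v) := by simp [epsVec, e1]

lemma sign_key (a b : Fin 4) :
    (1/4 : ℝ) * (1 + e0 a * e0 b) * (1 + e1 a * e1 b) = if a = b then 1 else 0 := by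
  fin_cases a <;> fin_cases b <;> simp [e0, e1, Fin.ext_iff] <;> norm_num <;> rw [if_neg (by decide)]

/-- Indicator polynomial: evaluates (on sign vectors) to 1 iff `φ v = a`. -/
def indPoly {V : Type*} (v : V) (a : Fin 4) : MvPolynomial (V × Fin 2) ℝ :=
  MvPolynomial.C (1/4 : ℝ) * (1 + MvPolynomial.C (e0 a) * MvPolynomial.X (v, 0)) *
    (1 + MvPolynomial.C (e1 a) * MvPolynomial.X (v, 1))

lemma eval_indPoly {V : Type*} (φ : V → Fin 4) (v : V) (a : Fin 4) :
    MvPolynomial.eval (epsVec φ) (indPoly v a) = if a = φ v then 1 else 0 := by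
  simp only [indPoly, map_mul, map_add, map_one, MvPolynomial.eval_C, MvPolynomial.eval_X,
    epsVec_fst, epsVec_snd]
  exact sign_key a (φ v)

lemma deg1 {σ : Type*} (e : ℝ) (p : σ) :
    (1 + MvPolynomial.C e * MvPolynomial.X p : MvPolynomial σ ℝ).totalDegree ≤ 1 := by
  refine le_trans (MvPolynomial.totalDegree_add _ _) ?_
  simp only [MvPolynomial.totalDegree_one, max_le_iff]
  refine ⟨Nat.zero_le _, le_trans (MvPolynomial.totalDegree_mul _ _) ?_⟩
  simp [MvPolynomial.totalDegree_C, MvPolynomial.totalDegree_X]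

lemma indPoly_totalDegree {V : Type*} (v : V) (a : Fin 4) :
    (indPoly v a).totalDegree ≤ 2 := by
  unfold indPoly
  refine le_trans (MvPolynomial.totalDegree_mul _ _) ?_
  refine le_trans (Nat.add_le_add (MvPolynomial.totalDegree_mul _ _) (deg1 _ _)) ?_
  refine le_trans (Nat.add_le_add (Nat.add_le_add
    (le_of_eq (MvPolynomial.totalDegree_C _)) (deg1 _ _)) le_rfl) ?_
  norm_num

lemma totDeg_sum_le {σ ι : Type*} (s : Finset ι) (f : ι → MvPolynomial σ ℝ) (n : ℕ)
    (h : ∀ i ∈ s, (f i).totalDegree ≤ n) : (∑ i ∈ s, f i).totalDegree ≤ n :=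
  le_trans (MvPolynomial.totalDegree_finset_sum s f) (Finset.sup_le h)

/-- The abstract weight function on value triples. -/
def W (a b c : Fin 4) : ℝ :=
  if (s(b, c)).IsDiag ∧ a ∈ s(b, c) then 0
  else if (s(b, c)).IsDiag then -1/3
  else if a ∈ s(b, c) then 1/6
  else if ∃ x y : Fin 4, s(b, c) = s(x, y) ∧ x < a ∧ a < y then 2/3
  else -1/3

lemma weight_eq_W {V : Type*} (φ : V → Fin 4) (v x y : V) :
    weight φ (v, s(x, y)) = W (φ v) (φ x) (φ y) := by
  simp only [weight, W, Sym2.map_pair_eq]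

lemma exists_pair {V : Type*} (s : Sym2 V) : ∃ p : V × V, s = s(p.1, p.2) := by
  induction s using Sym2.ind with
  | _ x y => exact ⟨(x, y), rfl⟩

/-- A chosen representative pair of an unordered pair. -/
def pairOf {V : Type*} (s : Sym2 V) : V × V := Classical.choose (exists_pair s)

lemma pairOf_spec {V : Type*} (s : Sym2 V) : s = s((pairOf s).1, (pairOf s).2) :=
  Classical.choose_spec (exists_pair s)

theorem X_is_polynomial_of_degree_six
    {V : Type*} [Fintype V] [DecidableEq V]
    (𝒞 : Finset (Constraint V)) (h𝒞 : ∀ C ∈ 𝒞, IsProperConstraint C) :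
    ∃ f : MvPolynomial (V × Fin 2) ℝ, f.totalDegree ≤ 6 ∧
      ∀ φ : V → Fin 4, MvPolynomial.eval (epsVec φ) f = ∑ C ∈ 𝒞, weight φ C := by
  classical
  refine ⟨∑ C ∈ 𝒞, ∑ a : Fin 4, ∑ b : Fin 4, ∑ c : Fin 4,
      MvPolynomial.C (W a b c) * indPoly C.1 a * indPoly (pairOf C.2).1 b *
        indPoly (pairOf C.2).2 c, ?_, ?_⟩
  · refine totDeg_sum_le _ _ _ fun C _ => ?_
    refine totDeg_sum_le _ _ _ fun a _ => ?_
    refine totDeg_sum_le _ _ _ fun b _ => ?_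
    refine totDeg_sum_le _ _ _ fun c _ => ?_
    calc (MvPolynomial.C (W a b c) * indPoly C.1 a * indPoly (pairOf C.2).1 b *
          indPoly (pairOf C.2).2 c).totalDegree
        ≤ (MvPolynomial.C (W a b c) * indPoly C.1 a * indPoly (pairOf C.2).1 b).totalDegree +
          (indPoly (pairOf C.2).2 c).totalDegree := MvPolynomial.totalDegree_mul _ _
      _ ≤ ((MvPolynomial.C (W a b c) * indPoly C.1 a).totalDegree +
            (indPoly (pairOf C.2).1 b).totalDegree) +
          (indPoly (pairOf C.2).2 c).totalDegree := by
            exact Nat.add_le_add_right (MvPolynomial.totalDegree_mul _ _) _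
      _ ≤ ((MvPolynomial.C (W a b c)).totalDegree + (indPoly C.1 a).totalDegree +
            (indPoly (pairOf C.2).1 b).totalDegree) +
          (indPoly (pairOf C.2).2 c).totalDegree := by
            exact Nat.add_le_add_right
              (Nat.add_le_add_right (MvPolynomial.totalDegree_mul _ _) _) _
      _ ≤ (0 + 2 + 2) + 2 := by
            refine Nat.add_le_add ?_ (indPoly_totalDegree _ _)
            refine Nat.add_le_add ?_ (indPoly_totalDegree _ _)
            refine Nat.add_le_add ?_ (indPoly_totalDegree _ _)
            simp [MvPolynomial.totalDegree_C]
      _ ≤ 6 := by norm_num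
  · intro φ
    rw [map_sum]
    refine Finset.sum_congr rfl fun C _ => ?_
    have hC : C = (C.1, s((pairOf C.2).1, (pairOf C.2).2)) := by
      rw [← pairOf_spec]
    rw [map_sum]
    simp only [map_sum, map_mul, MvPolynomial.eval_C, eval_indPoly]
    rw [Finset.sum_eq_single (φ C.1)]
    · rw [Finset.sum_eq_single (φ (pairOf C.2).1)]
      · rw [Finset.sum_eq_single (φ (pairOf C.2).2)]
        · have hw : weight φ C = W (φ C.1) (φ (pairOf C.2).1) (φ (pairOf C.2).2) := by
            conv_lhs => rw [hC]
            exact weight_eq_W φ _ _ _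
          simp [hw]
        · intro c _ hc
          simp [hc]
        · intro h; exact absurd (Finset.mem_univ _) h
      · intro b _ hb
        simp [hb]
      · intro h; exact absurd (Finset.mem_univ _) h
    · intro a _ ha
      simp [ha]
    · intro h; exact absurd (Finset.mem_univ _) h

end
end

section
/- Let V be a finite set and 𝒞 a finite set of betweenness constraints over V with |𝒞| = m, and suppose (V, 𝒞) is irreducible. Then the expectation of X(φ)^2, taken over φ chosen uniformly at random from the 4^{|V|} functions V → {0,1,2,3}, is at least (11/768)·m, where X(φ) = Σ_{C ∈ 𝒞} w(C, φ). -/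
open scoped Classical

noncomputable section

/-!
Identify `Fin 4` with `(ZMod 2)²` and expand `X φ = ∑ C, weight φ C` in the Walsh characters
`chi μ φ = ∏ v, walsh (μ v) (φ v)` of `(ZMod 2)^V`. They are orthogonal, so by Bessel's inequality
`E[X²]` is at least the sum of the squared Walsh coefficients of `X` over any set of masks `μ`; we keep
the masks whose support is exactly the scope `{i, x, y}` of some constraint.

The weight of `(i, {x, y})` only depends on `φ i, φ x, φ y`, so it is a Walsh polynomial supported
on masks with support in `{i, x, y}`. Hence the coefficient of `X` at a mask with support exactly
`{i, x, y}` only involves the constraints of the complete triple on `{i, x, y}`, of which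
irreducibility leaves at most two. A finite computation over the 27 masks with support `{i, x, y}`
shows that they carry at least `11/768` per constraint present.
-/

namespace Betweenness

open Finset

/-- The characters of `(ZMod 2)²`, reading `a : Fin 4` as the pair of binary digits of `a`. -/
def walsh (m a : Fin 4) : ℤ := (-1) ^ (m.val % 2 * (a.val % 2) + m.val / 2 * (a.val / 2))

lemma walsh_zero_left : ∀ a, walsh 0 a = 1 := by decide

lemma sum_walsh_mul_walsh : ∀ m m' : Fin 4,
    ∑ a, walsh m a * walsh m' a = if m = m' then 4 else 0 := by decide

def weight6 (a b c : Fin 4) : ℤ :=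
  if b = c ∧ (a = b ∨ a = c) then 0
  else if b = c then -2
  else if a = b ∨ a = c then 1
  else if (b < a ∧ a < c) ∨ (c < a ∧ a < b) then 4
  else -2

lemma weight_mk_s11 {V : Type*} (φ : V → Fin 4) (i x y : V) :
    weight φ (i, s(x, y)) = weight6 (φ i) (φ x) (φ y) / 6 := by
  have between_iff : (∃ b c : Fin 4, s(φ x, φ y) = s(b, c) ∧ b < φ i ∧ φ i < c) ↔
      (φ x < φ i ∧ φ i < φ y) ∨ (φ y < φ i ∧ φ i < φ x) := by
    simp only [Sym2.eq_iff]
    grind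
  simp only [weight, weight6, Sym2.map_mk, Sym2.mk_isDiag_iff, Sym2.mem_iff, between_iff]
  split_ifs <;> norm_num

/-- `48` times the Walsh coefficients of `weight6 / 6`; all unlisted ones vanish. -/
def coeff48 (m : Fin 4 × Fin 4 × Fin 4) : ℤ :=
  match m.1.val, m.2.1.val, m.2.2.val with
  | 0, 0, 3 => 3
  | 0, 1, 1 => -2
  | 0, 1, 2 => -3
  | 0, 2, 1 => -3
  | 0, 2, 2 => -8
  | 0, 3, 0 => 3
  | 0, 3, 3 => -2
  | 1, 0, 1 => 1
  | 1, 1, 0 => 1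
  | 1, 2, 3 => 1
  | 1, 3, 2 => 1
  | 2, 0, 1 => 3
  | 2, 0, 2 => 4
  | 2, 1, 0 => 3
  | 2, 1, 3 => -2
  | 2, 2, 0 => 4
  | 2, 2, 3 => -3
  | 2, 3, 1 => -2
  | 2, 3, 2 => -3
  | 3, 0, 0 => -6
  | 3, 0, 3 => 1
  | 3, 1, 2 => 1
  | 3, 2, 1 => 1
  | 3, 2, 2 => 6
  | 3, 3, 0 => 1
  | _, _, _ => 0

lemma weight6_eq_sum : ∀ a b c : Fin 4, 8 * weight6 a b c =
    ∑ m : Fin 4 × Fin 4 × Fin 4, coeff48 m * walsh m.1 a * walsh m.2.1 b * walsh m.2.2 c := by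
  decide

def nonzeroTriples : Finset (Fin 4 × Fin 4 × Fin 4) :=
  univ.filter fun m => m.1 ≠ 0 ∧ m.2.1 ≠ 0 ∧ m.2.2 ≠ 0

def tripleCoeff48 (p q r : Bool) (m : Fin 4 × Fin 4 × Fin 4) : ℤ :=
  (if p then coeff48 m else 0) + (if q then coeff48 (m.2.1, m.1, m.2.2) else 0) +
    (if r then coeff48 (m.2.2, m.1, m.2.1) else 0)

/-- The constant of the theorem: `11 / 768 = 33 / 48²`. -/
lemma tripleCoeff48_mass : ∀ p q r : Bool, ¬(p ∧ q ∧ r) →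
    33 * (p.toNat + q.toNat + r.toNat : ℤ) ≤ ∑ m ∈ nonzeroTriples, tripleCoeff48 p q r m ^ 2 := by
  decide

section Masks

variable {V : Type*} [DecidableEq V] {i x y : V}

def tripleMask (i x y : V) (m : Fin 4 × Fin 4 × Fin 4) : V → Fin 4 :=
  fun v => if v = i then m.1 else if v = x then m.2.1 else if v = y then m.2.2 else 0

lemma eq_tripleMask_iff (hix : i ≠ x) (hiy : i ≠ y) (hxy : x ≠ y) (m : Fin 4 × Fin 4 × Fin 4)
    (μ : V → Fin 4) :
    tripleMask i x y m = μ ↔ Function.support μ ⊆ {i, x, y} ∧ m = (μ i, μ x, μ y) := by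
  constructor
  · rintro rfl
    refine ⟨fun v hv => ?_, by simp [tripleMask, hix.symm, hiy.symm, hxy.symm]⟩
    simp only [Function.mem_support, tripleMask] at hv
    split_ifs at hv <;> simp_all
  · rintro ⟨hsupp, rfl⟩
    funext v
    simp only [tripleMask]
    split_ifs with h₁ h₂ h₃ <;> try (subst_vars; rfl)
    exact (Function.notMem_support.mp fun hv => by simpa [h₁, h₂, h₃] using hsupp hv).symm

lemma support_tripleMask (hix : i ≠ x) (hiy : i ≠ y) (hxy : x ≠ y) {m : Fin 4 × Fin 4 × Fin 4}
    (hm : m ∈ nonzeroTriples) : Function.support (tripleMask i x y m) = {i, x, y} := by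
  ext v
  simp only [nonzeroTriples, mem_filter, mem_univ, true_and] at hm
  simp only [Function.mem_support, tripleMask, Set.mem_insert_iff, Set.mem_singleton_iff]
  split_ifs <;> simp_all

def scope (C : Constraint V) : Finset V := insert C.1 C.2.toFinset

lemma scope_mk (i x y : V) : scope (i, s(x, y)) = {i, x, y} := by
  rw [scope, Sym2.toFinset_mk_eq]

lemma mem_completeTriple_of_subset_scope {C : Constraint V} (hC : IsProperConstraint C)
    (hix : i ≠ x) (hiy : i ≠ y) (hxy : x ≠ y) (h : {i, x, y} ⊆ scope C) :
    C ∈ completeTriple i x y := by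
  obtain ⟨a, bc⟩ := C
  obtain ⟨b, c, rfl, hbc, hab, hac⟩ := hC
  simp only [scope_mk, insert_subset_iff, mem_insert, mem_singleton] at h
  simp only [completeTriple, mem_insert, mem_singleton, Prod.mk.injEq, Sym2.eq_iff]
  grind

lemma scope_of_mem_completeTriple {C : Constraint V} (h : C ∈ completeTriple i x y) :
    scope C = {i, x, y} := by
  simp only [completeTriple, mem_insert, mem_singleton] at h
  rcases h with rfl | rfl | rfl <;> simp only [scope_mk] <;> grind

lemma filter_scope_eq {𝒞 : Finset (Constraint V)} (h𝒞 : ∀ C ∈ 𝒞, IsProperConstraint C)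
    (hix : i ≠ x) (hiy : i ≠ y) (hxy : x ≠ y) :
    𝒞.filter (scope · = {i, x, y}) = 𝒞.filter (· ∈ completeTriple i x y) :=
  filter_congr fun C hC => ⟨fun h => mem_completeTriple_of_subset_scope (h𝒞 C hC) hix hiy hxy h.ge,
    scope_of_mem_completeTriple⟩

end Masks

section Walsh

variable {V : Type*} [Fintype V]

def chi (μ φ : V → Fin 4) : ℝ := ∏ v, (walsh (μ v) (φ v) : ℝ)

variable [DecidableEq V]

lemma sum_chi_mul_chi (μ ν : V → Fin 4) :
    ∑ φ, chi μ φ * chi ν φ = if μ = ν then 4 ^ Fintype.card V else 0 := by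
  have hcoord (v : V) :
      ∑ a, (walsh (μ v) a : ℝ) * walsh (ν v) a = if μ v = ν v then 4 else 0 := by
    have := sum_walsh_mul_walsh (μ v) (ν v)
    split_ifs at this ⊢ <;> exact_mod_cast this
  simp_rw [chi, ← prod_mul_distrib]
  rw [← Fintype.prod_sum (fun v a => (walsh (μ v) a : ℝ) * walsh (ν v) a)]
  simp_rw [hcoord, Fintype.prod_ite_zero, funext_iff, prod_const, card_univ]

def walshCoeff (f : (V → Fin 4) → ℝ) (μ : V → Fin 4) : ℝ :=
  (∑ φ, f φ * chi μ φ) / 4 ^ Fintype.card V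

/-- Bessel's inequality for the orthonormal family `chi μ / 2 ^ |V|`. -/
lemma sum_sq_walshCoeff_le (f : (V → Fin 4) → ℝ) (S : Finset (V → Fin 4)) :
    ∑ μ ∈ S, walshCoeff f μ ^ 2 ≤ (∑ φ, f φ ^ 2) / 4 ^ Fintype.card V := by
  have h4 : (4 : ℝ) ^ Fintype.card V = (2 ^ Fintype.card V) ^ 2 := by
    rw [← pow_mul, mul_comm, pow_mul]; norm_num
  let e (μ : V → Fin 4) : EuclideanSpace ℝ (V → Fin 4) :=
    WithLp.toLp 2 fun φ => chi μ φ / 2 ^ Fintype.card V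
  have he : Orthonormal ℝ e := by
    rw [orthonormal_iff_ite]
    intro μ ν
    simp only [e, PiLp.inner_apply, RCLike.inner_apply, conj_trivial]
    have (φ : V → Fin 4) : chi ν φ / 2 ^ Fintype.card V * (chi μ φ / 2 ^ Fintype.card V) =
        chi μ φ * chi ν φ / 4 ^ Fintype.card V := by
      rw [h4]; ring
    simp_rw [this, ← sum_div, sum_chi_mul_chi]
    split_ifs <;> simp
  have hcoeff (μ : V → Fin 4) :
      ∑ φ, f φ * (chi μ φ / 2 ^ Fintype.card V) = 2 ^ Fintype.card V * walshCoeff f μ := by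
    simp only [walshCoeff, h4, ← mul_div_assoc, ← sum_div]
    field_simp
  have hbessel := he.sum_inner_products_le (WithLp.toLp 2 f) (s := S)
  simp only [e, PiLp.inner_apply, RCLike.inner_apply, conj_trivial, EuclideanSpace.real_norm_sq_eq,
    Real.norm_eq_abs, sq_abs, hcoeff, mul_pow, ← mul_sum, ← h4] at hbessel
  rwa [le_div_iff₀ (by positivity), mul_comm]

lemma walshCoeff_sum {ι : Type*} (s : Finset ι) (f : ι → (V → Fin 4) → ℝ) (μ : V → Fin 4) :
    walshCoeff (fun φ => ∑ k ∈ s, f k φ) μ = ∑ k ∈ s, walshCoeff (f k) μ := by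
  simp only [walshCoeff, sum_mul, ← sum_div]
  rw [sum_comm]

lemma walshCoeff_const_mul (c : ℝ) (f : (V → Fin 4) → ℝ) (μ : V → Fin 4) :
    walshCoeff (fun φ => c * f φ) μ = c * walshCoeff f μ := by
  simp only [walshCoeff, mul_assoc, ← mul_sum, mul_div_assoc]

lemma walshCoeff_chi (ν μ : V → Fin 4) : walshCoeff (chi ν) μ = if ν = μ then 1 else 0 := by
  rw [walshCoeff, sum_chi_mul_chi]
  split_ifs <;> simp

end Walsh

section Coefficients

variable {V : Type*} [Fintype V] [DecidableEq V] {i x y : V}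

lemma chi_tripleMask (hix : i ≠ x) (hiy : i ≠ y) (hxy : x ≠ y) (m : Fin 4 × Fin 4 × Fin 4)
    (φ : V → Fin 4) :
    chi (tripleMask i x y m) φ = walsh m.1 (φ i) * walsh m.2.1 (φ x) * walsh m.2.2 (φ y) := by
  rw [chi, ← prod_subset (subset_univ {i, x, y})]
  · simp [prod_insert, hix, hiy, hxy, tripleMask, hix.symm, hiy.symm, hxy.symm, mul_assoc]
  · intro v _ hv
    simp_all [tripleMask, walsh_zero_left]

lemma weight_eq_sum_chi (hix : i ≠ x) (hiy : i ≠ y) (hxy : x ≠ y) (φ : V → Fin 4) :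
    weight φ (i, s(x, y)) = ∑ m, (coeff48 m / 48 : ℝ) * chi (tripleMask i x y m) φ := by
  have h := congrArg (Int.cast (R := ℝ)) (weight6_eq_sum (φ i) (φ x) (φ y))
  push_cast at h
  simp only [weight_mk_s11, chi_tripleMask hix hiy hxy]
  rw [show (weight6 (φ i) (φ x) (φ y) : ℝ) / 6 = 8 * weight6 (φ i) (φ x) (φ y) / 48 by ring, h,
    sum_div]
  exact sum_congr rfl fun m _ => by ring

lemma walshCoeff_weight (hix : i ≠ x) (hiy : i ≠ y) (hxy : x ≠ y) (μ : V → Fin 4) :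
    walshCoeff (fun φ => weight φ (i, s(x, y))) μ =
      if Function.support μ ⊆ {i, x, y} then (coeff48 (μ i, μ x, μ y) / 48 : ℝ) else 0 := by
  simp only [weight_eq_sum_chi hix hiy hxy, walshCoeff_sum, walshCoeff_const_mul, walshCoeff_chi,
    eq_tripleMask_iff hix hiy hxy, mul_ite, mul_one, mul_zero]
  split_ifs with h <;> simp [h]

def masksOn (T : Finset V) : Finset (V → Fin 4) :=
  univ.filter fun μ => Function.support μ = T

lemma pairwiseDisjoint_masksOn (𝒯 : Finset (Finset V)) :
    (𝒯 : Set (Finset V)).PairwiseDisjoint masksOn := by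
  intro T₁ _ T₂ _ hne
  refine disjoint_left.2 fun μ h₁ h₂ => hne ?_
  simp only [masksOn, mem_filter, mem_univ, true_and] at h₁ h₂
  exact coe_injective (h₁.symm.trans h₂)

lemma sum_masksOn_triple (hix : i ≠ x) (hiy : i ≠ y) (hxy : x ≠ y)
    (g : Fin 4 × Fin 4 × Fin 4 → ℝ) :
    ∑ μ ∈ masksOn {i, x, y}, g (μ i, μ x, μ y) = ∑ m ∈ nonzeroTriples, g m := by
  have hsupp {μ : V → Fin 4} (hμ : μ ∈ masksOn {i, x, y}) : Function.support μ = {i, x, y} := by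
    simpa [masksOn] using hμ
  refine sum_nbij' (fun μ => (μ i, μ x, μ y)) (tripleMask i x y) (fun μ hμ => ?_)
    (fun m hm => ?_) (fun μ hμ => ?_) (fun m _ => ?_) (fun _ _ => rfl)
  · simp only [nonzeroTriples, mem_filter, mem_univ, true_and]
    refine ⟨?_, ?_, ?_⟩ <;> apply Function.mem_support.1 <;> simp [hsupp hμ]
  · simp [masksOn, support_tripleMask hix hiy hxy hm]
  · exact (eq_tripleMask_iff hix hiy hxy _ μ).2 ⟨(hsupp hμ).le, rfl⟩
  · exact (((eq_tripleMask_iff hix hiy hxy m _).1 rfl).2).symm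

variable {𝒞 : Finset (Constraint V)}

lemma walshCoeff_sum_weight (h𝒞 : ∀ C ∈ 𝒞, IsProperConstraint C)
    (hix : i ≠ x) (hiy : i ≠ y) (hxy : x ≠ y) {μ : V → Fin 4} (hμ : μ ∈ masksOn {i, x, y}) :
    walshCoeff (fun φ => ∑ C ∈ 𝒞, weight φ C) μ =
      tripleCoeff48 ((i, s(x, y)) ∈ 𝒞) ((x, s(i, y)) ∈ 𝒞) ((y, s(i, x)) ∈ 𝒞) (μ i, μ x, μ y) / 48 := by
  have hsupp : Function.support μ = {i, x, y} := by simpa [masksOn] using hμ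
  rw [walshCoeff_sum, ← sum_filter_of_ne (p := (· ∈ completeTriple i x y))]
  · rw [filter_mem_eq_inter, inter_comm, ← filter_mem_eq_inter, sum_filter]
    simp only [completeTriple]
    rw [sum_insert (by simp [hix, hiy]), sum_insert (by simp [hxy]), sum_singleton,
      walshCoeff_weight hix hiy hxy, walshCoeff_weight hix.symm hxy hiy,
      walshCoeff_weight hiy.symm hxy.symm hix]
    have hyix : ({i, x, y} : Set V) ⊆ {y, i, x} := by rw [Set.insert_comm y, Set.pair_comm]
    simp only [hsupp, tripleCoeff48, Set.insert_comm x i, hyix, subset_refl, if_true,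
      decide_eq_true_eq]
    push_cast [apply_ite]
    split_ifs <;> ring
  · intro C hC hne
    obtain ⟨a, bc⟩ := C
    obtain ⟨b, c, rfl, hbc, hab, hac⟩ := h𝒞 _ hC
    rw [walshCoeff_weight hab hac hbc, ne_eq, ite_eq_right_iff, Classical.not_imp, hsupp] at hne
    refine mem_completeTriple_of_subset_scope (h𝒞 _ hC) hix hiy hxy ?_
    rw [scope_mk, ← coe_subset]
    simpa using hne.1

lemma card_filter_mem_completeTriple_le (h𝒞 : ∀ C ∈ 𝒞, IsProperConstraint C)
    (hirr : IrreducibleInstance 𝒞) (hix : i ≠ x) (hiy : i ≠ y) (hxy : x ≠ y) :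
    (11 / 768 : ℝ) * #(𝒞.filter (· ∈ completeTriple i x y)) ≤
      ∑ μ ∈ masksOn {i, x, y}, walshCoeff (fun φ => ∑ C ∈ 𝒞, weight φ C) μ ^ 2 := by
  set p := decide ((i, s(x, y)) ∈ 𝒞)
  set q := decide ((x, s(i, y)) ∈ 𝒞)
  set r := decide ((y, s(i, x)) ∈ 𝒞)
  have hcard : #(𝒞.filter (· ∈ completeTriple i x y)) = p.toNat + q.toNat + r.toNat := by
    rw [filter_mem_eq_inter, inter_comm, ← filter_mem_eq_inter, card_filter, completeTriple,
      sum_insert (by simp [hix, hiy]), sum_insert (by simp [hxy]), sum_singleton]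
    simp only [p, q, r, Bool.toNat, Bool.cond_decide, add_assoc]
  have hnotall : ¬(p ∧ q ∧ r) := fun ⟨hp, hq, hr⟩ =>
    hirr ⟨i, x, y, hix, hiy, hxy, by simp_all [p, q, r, completeTriple, insert_subset_iff]⟩
  have hmass := (Int.cast_le (R := ℝ)).2 (tripleCoeff48_mass p q r hnotall)
  push_cast at hmass
  rw [sum_congr rfl fun μ hμ => by rw [walshCoeff_sum_weight h𝒞 hix hiy hxy hμ],
    sum_masksOn_triple hix hiy hxy (fun m => (tripleCoeff48 p q r m / 48 : ℝ) ^ 2), hcard]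
  calc (11 / 768 : ℝ) * ↑(p.toNat + q.toNat + r.toNat)
      = 33 * (p.toNat + q.toNat + r.toNat : ℝ) / 48 ^ 2 := by push_cast; ring
    _ ≤ (∑ m ∈ nonzeroTriples, (tripleCoeff48 p q r m : ℝ) ^ 2) / 48 ^ 2 := by gcongr
    _ = ∑ m ∈ nonzeroTriples, (tripleCoeff48 p q r m / 48 : ℝ) ^ 2 := by
      rw [sum_div]; simp only [div_pow]

lemma card_filter_scope_le (h𝒞 : ∀ C ∈ 𝒞, IsProperConstraint C)
    (hirr : IrreducibleInstance 𝒞) {T : Finset V} (hT : T ∈ 𝒞.image scope) :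
    (11 / 768 : ℝ) * #(𝒞.filter (scope · = T)) ≤
      ∑ μ ∈ masksOn T, walshCoeff (fun φ => ∑ C ∈ 𝒞, weight φ C) μ ^ 2 := by
  obtain ⟨C, hC, rfl⟩ := mem_image.1 hT
  obtain ⟨x, y, hCxy, hxy, hix, hiy⟩ := h𝒞 C hC
  rw [show scope C = {C.1, x, y} by rw [← scope_mk, ← hCxy], filter_scope_eq h𝒞 hix hiy hxy]
  exact card_filter_mem_completeTriple_le h𝒞 hirr hix hiy hxy

end Coefficients

end Betweenness

open Betweenness Finset

theorem second_moment_lower_bound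
    {V : Type*} [Fintype V] [DecidableEq V]
    (𝒞 : Finset (Constraint V)) (m : ℕ) (hm : 𝒞.card = m)
    (h𝒞 : ∀ C ∈ 𝒞, IsProperConstraint C)
    (hirr : IrreducibleInstance 𝒞) :
    (11 / 768 : ℝ) * m ≤
      (∑ φ : V → Fin 4, (∑ C ∈ 𝒞, weight φ C) ^ 2) / 4 ^ Fintype.card V := by
  calc (11 / 768 : ℝ) * m
      = ∑ T ∈ 𝒞.image scope, (11 / 768 : ℝ) * #(𝒞.filter (scope · = T)) := by
        rw [← mul_sum, ← hm, card_eq_sum_card_fiberwise fun C hC => mem_image_of_mem scope hC,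
          Nat.cast_sum]
    _ ≤ ∑ T ∈ 𝒞.image scope, ∑ μ ∈ masksOn T,
          walshCoeff (fun φ => ∑ C ∈ 𝒞, weight φ C) μ ^ 2 :=
        sum_le_sum fun _ hT => card_filter_scope_le h𝒞 hirr hT
    _ = ∑ μ ∈ (𝒞.image scope).biUnion masksOn,
          walshCoeff (fun φ => ∑ C ∈ 𝒞, weight φ C) μ ^ 2 :=
        (sum_biUnion (pairwiseDisjoint_masksOn _)).symm
    _ ≤ _ := sum_sq_walshCoeff_le _ _

end
end

section
/- Let V be a finite set and 𝒞 = {C_1, …, C_m} a finite set of betweenness constraints over V, and suppose (V, 𝒞) is irreducible. Then Σ_{1 ≤ l ≠ l′ ≤ m} E[w(C_l, φ)·w(C_{l′}, φ)] ≥ −(77/768)·m, where the expectation is over φ chosen uniformly at random from the 4^{|V|} functions V → {0,1,2,3} and the sum is over ordered pairs of distinct indices. -/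
open scoped Classical

noncomputable section

/-! ### Auxiliary material for the proof -/

/-- Six times the weight function, as an integer-valued function of the three values. -/
def BWz : Fin 4 → Fin 4 → Fin 4 → ℤ := fun a b c =>
  if b = c ∧ (a = b ∨ a = c) then 0
  else if b = c then -2
  else if a = b ∨ a = c then 1
  else if (b < a ∧ a < c) ∨ (c < a ∧ a < b) then 4
  else -2

/-- 384 times the top Efron–Stein component of the weight function. -/
def BHz : Fin 4 → Fin 4 → Fin 4 → ℤ := ![
  ![![0, 80, -16, -64], ![80, 32, -32, -80], ![-16, -32, 32, 16], ![-64, -80, 16, 128]],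
  ![![-160, -16, 112, 64], ![-16, 0, 32, -16], ![112, 32, -64, -80], ![64, -16, -80, 32]],
  ![![32, -80, -16, 64], ![-80, -64, 32, 112], ![-16, 32, 0, -16], ![64, 112, -16, -160]],
  ![![128, 16, -80, -64], ![16, 32, -32, -16], ![-80, -32, 32, 80], ![-64, -16, 80, 0]]]

def BJ1z : Fin 4 → Fin 4 → ℤ :=
  ![![-144, -32, 64, 112], ![-32, -48, 16, 64], ![64, 16, -48, -32], ![112, 64, -32, -144]]
def BJ2z : Fin 4 → Fin 4 → ℤ :=
  ![![48, -80, -80, -80], ![112, 48, 16, 16], ![16, 16, 48, 112], ![-80, -80, -80, 48]]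
def BJ3z : Fin 4 → Fin 4 → ℤ :=
  ![![96, -32, -32, -32], ![64, 0, -32, -32], ![-32, -32, 0, 64], ![-32, -32, -32, 96]]

lemma BHz_symm : ∀ a b c, BHz a b c = BHz a c b := by decide
lemma BHz_marg1 : ∀ b c : Fin 4, (∑ a : Fin 4, BHz a b c) = 0 := by decide
lemma BHz_marg2 : ∀ a c : Fin 4, (∑ b : Fin 4, BHz a b c) = 0 := by decide
lemma BHz_marg3 : ∀ a b : Fin 4, (∑ c : Fin 4, BHz a b c) = 0 := by decide
lemma Bdecomp : ∀ a b c, 64 * BWz a b c = BHz a b c + BJ1z b c + BJ2z a c + BJ3z a b := by decide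
lemma BHz_sq : (∑ a : Fin 4, ∑ b : Fin 4, ∑ c : Fin 4, (BHz a b c) ^ 2) = 270336 := by decide
lemma BHz_cross1 :
    (∑ a : Fin 4, ∑ b : Fin 4, ∑ c : Fin 4, BHz a b c * BHz b a c) = -135168 := by decide
lemma BHz_cross2 :
    (∑ a : Fin 4, ∑ b : Fin 4, ∑ c : Fin 4, BHz a b c * BHz c a b) = -135168 := by decide
lemma BWz_sq : (∑ a : Fin 4, ∑ b : Fin 4, ∑ c : Fin 4, (BWz a b c) ^ 2) = 264 := by decide

section SumLemmas

variable {V : Type*} [Fintype V] [DecidableEq V]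

lemma Bsum_zero (F : (V → Fin 4) → ℝ) (v : V)
    (h : ∀ φ : V → Fin 4, (∑ a : Fin 4, F (Function.update φ v a)) = 0) :
    ∑ φ : V → Fin 4, F φ = 0 := by
  have hcomp := Equiv.sum_comp (Equiv.funSplitAt v (Fin 4)).symm F
  rw [← hcomp, Fintype.sum_prod_type, Finset.sum_comm]
  apply Finset.sum_eq_zero
  intro g _
  have key : ∀ a : Fin 4, (Equiv.funSplitAt v (Fin 4)).symm (a, g)
      = Function.update ((Equiv.funSplitAt v (Fin 4)).symm (0, g)) v a := by
    intro a; funext j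
    by_cases hj : j = v
    · subst hj; simp [Equiv.funSplitAt, Equiv.piSplitAt, Function.update]
    · simp [Equiv.funSplitAt, Equiv.piSplitAt, Function.update, hj]
  calc (∑ a : Fin 4, F ((Equiv.funSplitAt v (Fin 4)).symm (a, g)))
      = ∑ a : Fin 4, F (Function.update ((Equiv.funSplitAt v (Fin 4)).symm (0, g)) v a) := by
        apply Finset.sum_congr rfl; intro a _; rw [key]
    _ = 0 := h _

lemma Bsum_reduce (g : Fin 4 → (V → Fin 4) → ℝ) (v : V)
    (hg : ∀ (φ : V → Fin 4) (a : Fin 4) (b : Fin 4), g b (Function.update φ v a) = g b φ) :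
    ∑ φ : V → Fin 4, g (φ v) φ = ∑ φ : V → Fin 4, (∑ t : Fin 4, g t φ) / 4 := by
  have h0 : ∑ φ : V → Fin 4, (g (φ v) φ - (∑ t : Fin 4, g t φ) / 4) = 0 := by
    apply Bsum_zero _ v
    intro φ
    have e1 : ∀ a : Fin 4, g (Function.update φ v a v) (Function.update φ v a) = g a φ := by
      intro a; rw [Function.update_self, hg]
    have e2 : ∀ a : Fin 4, (∑ t : Fin 4, g t (Function.update φ v a)) = ∑ t : Fin 4, g t φ := by
      intro a; exact Finset.sum_congr rfl fun t _ => hg φ a t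
    calc (∑ a : Fin 4, (g (Function.update φ v a v) (Function.update φ v a)
            - (∑ t : Fin 4, g t (Function.update φ v a)) / 4))
        = ∑ a : Fin 4, (g a φ - (∑ t : Fin 4, g t φ) / 4) := by
          apply Finset.sum_congr rfl; intro a _; rw [e1, e2]
      _ = (∑ a : Fin 4, g a φ) - (4 : ℕ) • ((∑ t : Fin 4, g t φ) / 4) := by
          rw [Finset.sum_sub_distrib, Finset.sum_const, Finset.card_univ, Fintype.card_fin]
      _ = 0 := by push_cast; ring
  have hsub := Finset.sum_sub_distrib (s := (Finset.univ : Finset (V → Fin 4)))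
    (f := fun φ => g (φ v) φ) (g := fun φ => (∑ t : Fin 4, g t φ) / 4)
  rw [hsub] at h0
  linarith

lemma Bsum_junta3 (q : Fin 4 → Fin 4 → Fin 4 → ℝ) (u x y : V)
    (hux : u ≠ x) (huy : u ≠ y) (hxy : x ≠ y) :
    ∑ φ : V → Fin 4, q (φ u) (φ x) (φ y)
      = (∑ a : Fin 4, ∑ b : Fin 4, ∑ c : Fin 4, q a b c) * 4 ^ Fintype.card V / 64 := by
  have s1 : ∑ φ : V → Fin 4, q (φ u) (φ x) (φ y)
      = ∑ φ : V → Fin 4, (∑ t : Fin 4, q t (φ x) (φ y)) / 4 := by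
    apply Bsum_reduce (g := fun b φ => q b (φ x) (φ y)) u
    intro φ a b
    rw [Function.update_of_ne (Ne.symm hux), Function.update_of_ne (Ne.symm huy)]
  have s2 : ∑ φ : V → Fin 4, (∑ t : Fin 4, q t (φ x) (φ y)) / 4
      = ∑ φ : V → Fin 4, (∑ b : Fin 4, (∑ t : Fin 4, q t b (φ y)) / 4) / 4 := by
    apply Bsum_reduce (g := fun b φ => (∑ t : Fin 4, q t b (φ y)) / 4) x
    intro φ a b
    rw [Function.update_of_ne (Ne.symm hxy)]
  have s3 : ∑ φ : V → Fin 4, (∑ b : Fin 4, (∑ t : Fin 4, q t b (φ y)) / 4) / 4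
      = ∑ φ : V → Fin 4, (∑ c : Fin 4, (∑ b : Fin 4, (∑ t : Fin 4, q t b c) / 4) / 4) / 4 := by
    apply Bsum_reduce (g := fun c φ => (∑ b : Fin 4, (∑ t : Fin 4, q t b c) / 4) / 4) y
    intro φ a b
    rfl
  rw [s1, s2, s3, Finset.sum_const, Finset.card_univ, Fintype.card_fun, Fintype.card_fin,
    nsmul_eq_mul]
  have h1 : (∑ c : Fin 4, ∑ b : Fin 4, ∑ t : Fin 4, q t b c)
      = ∑ a : Fin 4, ∑ b : Fin 4, ∑ c : Fin 4, q a b c := by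
    rw [Finset.sum_comm]
    rw [show (∑ b : Fin 4, ∑ c : Fin 4, ∑ t : Fin 4, q t b c)
        = ∑ b : Fin 4, ∑ t : Fin 4, ∑ c : Fin 4, q t b c from
      Finset.sum_congr rfl fun b _ => Finset.sum_comm]
    rw [Finset.sum_comm]
  have hre : (∑ c : Fin 4, (∑ b : Fin 4, (∑ t : Fin 4, q t b c) / 4) / 4) / 4
      = (∑ a : Fin 4, ∑ b : Fin 4, ∑ c : Fin 4, q a b c) / 64 := by
    calc (∑ c : Fin 4, (∑ b : Fin 4, (∑ t : Fin 4, q t b c) / 4) / 4) / 4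
        = (∑ c : Fin 4, (∑ b : Fin 4, ∑ t : Fin 4, q t b c) / 16) / 4 := by
          congr 1
          apply Finset.sum_congr rfl
          intro c _
          rw [← Finset.sum_div, div_div]
          norm_num
      _ = (∑ a : Fin 4, ∑ b : Fin 4, ∑ c : Fin 4, q a b c) / 64 := by
          rw [← Finset.sum_div, div_div, h1]
          norm_num
  rw [hre]
  push_cast
  ring

end SumLemmas

lemma Bweight_eq {V : Type*} (φ : V → Fin 4) (v x y : V) :
    weight φ (v, s(x, y)) = (BWz (φ v) (φ x) (φ y) : ℝ) / 6 := by
  have hex : (∃ s t : Fin 4, s(φ x, φ y) = s(s, t) ∧ s < φ v ∧ φ v < t)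
      ↔ ((φ x < φ v ∧ φ v < φ y) ∨ (φ y < φ v ∧ φ v < φ x)) := by
    constructor
    · rintro ⟨s, t, hst, h1, h2⟩
      rw [Sym2.eq_iff] at hst
      rcases hst with ⟨hx, hy⟩ | ⟨hx, hy⟩
      · subst hx; subst hy; exact Or.inl ⟨h1, h2⟩
      · subst hx; subst hy; exact Or.inr ⟨h1, h2⟩
    · rintro (⟨h1, h2⟩ | ⟨h1, h2⟩)
      · exact ⟨φ x, φ y, rfl, h1, h2⟩
      · exact ⟨φ y, φ x, Sym2.eq_swap, h1, h2⟩
  simp only [weight, Sym2.map_pair_eq, Sym2.mk_isDiag_iff, Sym2.mem_iff, hex]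
  obtain ⟨a, ha⟩ : ∃ a, φ v = a := ⟨_, rfl⟩
  obtain ⟨b, hb⟩ : ∃ b, φ x = b := ⟨_, rfl⟩
  obtain ⟨c, hc⟩ : ∃ c, φ y = c := ⟨_, rfl⟩
  rw [ha, hb, hc]
  fin_cases a <;> fin_cases b <;> fin_cases c <;> norm_num [BWz, Fin.ext_iff, Fin.lt_def]

/-- The (scaled) top Efron–Stein part of the weight of a constraint. -/
def BHf {W : Type*} (φ : W → Fin 4) (C : Constraint W) : ℝ :=
  Sym2.lift ⟨fun b c => ((BHz (φ C.1) b c : ℤ) : ℝ),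
    fun b c => by
      show ((BHz (φ C.1) b c : ℤ) : ℝ) = ((BHz (φ C.1) c b : ℤ) : ℝ)
      exact_mod_cast BHz_symm (φ C.1) b c⟩
    (C.2.map φ)

lemma BHf_eq {W : Type*} (φ : W → Fin 4) (v x y : W) :
    BHf φ (v, s(x, y)) = ((BHz (φ v) (φ x) (φ y) : ℤ) : ℝ) := by
  simp [BHf, Sym2.map_pair_eq]

section ProdZero

variable {V : Type*} [Fintype V] [DecidableEq V]

lemma Bsum_h_mul_zero (u x y : V) (hux : u ≠ x) (huy : u ≠ y) (hxy : x ≠ y)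
    (G : (V → Fin 4) → ℝ) (v : V) (hv : v = u ∨ v = x ∨ v = y)
    (hG : ∀ (φ : V → Fin 4) (a : Fin 4), G (Function.update φ v a) = G φ) :
    ∑ φ : V → Fin 4, ((BHz (φ u) (φ x) (φ y) : ℤ) : ℝ) * G φ = 0 := by
  apply Bsum_zero _ v
  intro φ
  rcases hv with rfl | rfl | rfl
  · have e : ∀ a : Fin 4, ((BHz (Function.update φ v a v)
        (Function.update φ v a x) (Function.update φ v a y) : ℤ) : ℝ)
          * G (Function.update φ v a)
        = ((BHz a (φ x) (φ y) : ℤ) : ℝ) * G φ := by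
      intro a
      rw [hG, Function.update_self, Function.update_of_ne (Ne.symm hux),
        Function.update_of_ne (Ne.symm huy)]
    rw [Finset.sum_congr rfl fun a _ => e a, ← Finset.sum_mul]
    have hm : (∑ a : Fin 4, ((BHz a (φ x) (φ y) : ℤ) : ℝ)) = 0 := by
      exact_mod_cast congrArg (fun z : ℤ => (z : ℝ)) (BHz_marg1 (φ x) (φ y))
    rw [hm, zero_mul]
  · have e : ∀ a : Fin 4, ((BHz (Function.update φ v a u)
        (Function.update φ v a v) (Function.update φ v a y) : ℤ) : ℝ)
          * G (Function.update φ v a)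
        = ((BHz (φ u) a (φ y) : ℤ) : ℝ) * G φ := by
      intro a
      rw [hG, Function.update_self, Function.update_of_ne hux,
        Function.update_of_ne (Ne.symm hxy)]
    rw [Finset.sum_congr rfl fun a _ => e a, ← Finset.sum_mul]
    have hm : (∑ a : Fin 4, ((BHz (φ u) a (φ y) : ℤ) : ℝ)) = 0 := by
      exact_mod_cast congrArg (fun z : ℤ => (z : ℝ)) (BHz_marg2 (φ u) (φ y))
    rw [hm, zero_mul]
  · have e : ∀ a : Fin 4, ((BHz (Function.update φ v a u)
        (Function.update φ v a x) (Function.update φ v a v) : ℤ) : ℝ)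
          * G (Function.update φ v a)
        = ((BHz (φ u) (φ x) a : ℤ) : ℝ) * G φ := by
      intro a
      rw [hG, Function.update_self, Function.update_of_ne huy,
        Function.update_of_ne hxy]
    rw [Finset.sum_congr rfl fun a _ => e a, ← Finset.sum_mul]
    have hm : (∑ a : Fin 4, ((BHz (φ u) (φ x) a : ℤ) : ℝ)) = 0 := by
      exact_mod_cast congrArg (fun z : ℤ => (z : ℝ)) (BHz_marg3 (φ u) (φ x))
    rw [hm, zero_mul]

end ProdZero

lemma Bexists_avoid {W : Type*} (u x y s t : W) (hux : u ≠ x) (huy : u ≠ y) (hxy : x ≠ y) :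
    ∃ v, (v = u ∨ v = x ∨ v = y) ∧ v ≠ s ∧ v ≠ t := by
  by_cases h1 : u ≠ s ∧ u ≠ t
  · exact ⟨u, Or.inl rfl, h1.1, h1.2⟩
  by_cases h2 : x ≠ s ∧ x ≠ t
  · exact ⟨x, Or.inr (Or.inl rfl), h2.1, h2.2⟩
  refine ⟨y, Or.inr (Or.inr rfl), ?_, ?_⟩
  · rcases not_and_or.mp h1 with h | h <;> rcases not_and_or.mp h2 with h' | h' <;>
      rw [not_ne_iff] at h h'
    · exact absurd (h.trans h'.symm) hux
    · intro hy; exact huy (h ▸ hy).symm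
    · intro hy; exact hxy (h' ▸ hy).symm
    · exact absurd (h.trans h'.symm) hux
  · rcases not_and_or.mp h1 with h | h <;> rcases not_and_or.mp h2 with h' | h' <;>
      rw [not_ne_iff] at h h'
    · exact absurd (h.trans h'.symm) hux
    · intro hy; exact hxy (h' ▸ hy).symm
    · intro hy; exact huy (h ▸ hy).symm
    · exact absurd (h.trans h'.symm) hux

lemma Btriple_cases {W : Type*} (p q r u x y : W)
    (hpq : p ≠ q) (hpr : p ≠ r) (hqr : q ≠ r)
    (hux : u ≠ x) (huy : u ≠ y) (hxy : x ≠ y) :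
    (∃ v, (v = u ∨ v = x ∨ v = y) ∧ v ≠ p ∧ v ≠ q ∧ v ≠ r) ∨
    (∃ v, (v = p ∨ v = q ∨ v = r) ∧ v ≠ u ∧ v ≠ x ∧ v ≠ y) ∨
    ((u = p ∧ s(x, y) = s(q, r)) ∨ (u = q ∧ s(x, y) = s(p, r)) ∨ (u = r ∧ s(x, y) = s(p, q))) := by
  by_cases hu : u = p ∨ u = q ∨ u = r
  case neg => push_neg at hu; exact Or.inl ⟨u, Or.inl rfl, hu.1, hu.2.1, hu.2.2⟩
  by_cases hx : x = p ∨ x = q ∨ x = r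
  case neg => push_neg at hx; exact Or.inl ⟨x, Or.inr (Or.inl rfl), hx.1, hx.2.1, hx.2.2⟩
  by_cases hy : y = p ∨ y = q ∨ y = r
  case neg => push_neg at hy; exact Or.inl ⟨y, Or.inr (Or.inr rfl), hy.1, hy.2.1, hy.2.2⟩
  right; right
  rcases hu with hu | hu | hu
  · subst hu
    left
    refine ⟨rfl, ?_⟩
    rcases hx with hx | hx | hx
    · exact absurd hx hux.symm
    · subst hx
      rcases hy with hy | hy | hy
      · exact absurd hy huy.symm
      · exact absurd hy hxy.symm
      · subst hy; rfl
    · subst hx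
      rcases hy with hy | hy | hy
      · exact absurd hy huy.symm
      · subst hy; exact Sym2.eq_swap
      · exact absurd hy hxy.symm
  · subst hu
    right; left
    refine ⟨rfl, ?_⟩
    rcases hx with hx | hx | hx
    · subst hx
      rcases hy with hy | hy | hy
      · exact absurd hy hxy.symm
      · exact absurd hy huy.symm
      · subst hy; rfl
    · exact absurd hx hux.symm
    · subst hx
      rcases hy with hy | hy | hy
      · subst hy; exact Sym2.eq_swap
      · exact absurd hy huy.symm
      · exact absurd hy hxy.symm
  · subst hu
    right; right
    refine ⟨rfl, ?_⟩
    rcases hx with hx | hx | hx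
    · subst hx
      rcases hy with hy | hy | hy
      · exact absurd hy hxy.symm
      · subst hy; rfl
      · exact absurd hy huy.symm
    · subst hx
      rcases hy with hy | hy | hy
      · subst hy; exact Sym2.eq_swap
      · exact absurd hy hxy.symm
      · exact absurd hy huy.symm
    · exact absurd hx hux.symm

theorem cross_terms_lower_bound
    {V : Type*} [Fintype V] [DecidableEq V]
    (𝒞 : Finset (Constraint V)) (m : ℕ) (hm : 𝒞.card = m)
    (h𝒞 : ∀ C ∈ 𝒞, IsProperConstraint C)
    (hirr : IrreducibleInstance 𝒞) :
    -(77 / 768 : ℝ) * m ≤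
      ∑ C ∈ 𝒞, ∑ C' ∈ 𝒞.erase C,
        (∑ φ : V → Fin 4, weight φ C * weight φ C') / 4 ^ Fintype.card V := by
  classical
  set N : ℝ := 4 ^ Fintype.card V with hNdef
  have hNpos : (0 : ℝ) < N := by positivity
  -- weight and top-part representations for proper constraints
  have hrepW : ∀ C ∈ 𝒞, ∃ q r : V, C = (C.1, s(q, r)) ∧ C.1 ≠ q ∧ C.1 ≠ r ∧ q ≠ r ∧
      (∀ φ : V → Fin 4, weight φ C = (BWz (φ C.1) (φ q) (φ r) : ℝ) / 6) ∧
      (∀ φ : V → Fin 4, BHf φ C = ((BHz (φ C.1) (φ q) (φ r) : ℤ) : ℝ)) := by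
    intro C hC
    obtain ⟨q, r, h2, hqr, h1q, h1r⟩ := h𝒞 C hC
    have hCrep : C = (C.1, s(q, r)) := by rw [← h2]
    refine ⟨q, r, hCrep, h1q, h1r, hqr, ?_, ?_⟩
    · intro φ; conv_lhs => rw [hCrep]
      exact Bweight_eq φ C.1 q r
    · intro φ; conv_lhs => rw [hCrep]
      exact BHf_eq φ C.1 q r
  -- squared weight sums
  have fact1 : ∀ C ∈ 𝒞, (∑ φ : V → Fin 4, (weight φ C) ^ 2) = 11 / 96 * N := by
    intro C hC
    obtain ⟨q, r, _, h1q, h1r, hqr, hw, _⟩ := hrepW C hC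
    have : (∑ φ : V → Fin 4, (weight φ C) ^ 2)
        = ∑ φ : V → Fin 4, ((BWz (φ C.1) (φ q) (φ r) : ℝ)) ^ 2 / 36 := by
      apply Finset.sum_congr rfl
      intro φ _
      rw [hw φ]; ring
    rw [this, ← Finset.sum_div,
      Bsum_junta3 (fun a b c => ((BWz a b c : ℤ) : ℝ) ^ 2) C.1 q r h1q h1r hqr]
    have h264 : (∑ a : Fin 4, ∑ b : Fin 4, ∑ c : Fin 4, ((BWz a b c : ℤ) : ℝ) ^ 2)
        = (264 : ℝ) := by
      exact_mod_cast congrArg (fun z : ℤ => (z : ℝ)) BWz_sq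
    rw [h264, ← hNdef]
    ring
  have fact2 : ∀ C ∈ 𝒞, (∑ φ : V → Fin 4, (BHf φ C) ^ 2) = 4224 * N := by
    intro C hC
    obtain ⟨q, r, _, h1q, h1r, hqr, _, hh⟩ := hrepW C hC
    have : (∑ φ : V → Fin 4, (BHf φ C) ^ 2)
        = ∑ φ : V → Fin 4, ((BHz (φ C.1) (φ q) (φ r) : ℤ) : ℝ) ^ 2 := by
      apply Finset.sum_congr rfl
      intro φ _
      rw [hh φ]
    rw [this, Bsum_junta3 (fun a b c => ((BHz a b c : ℤ) : ℝ) ^ 2) C.1 q r h1q h1r hqr]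
    have hsq : (∑ a : Fin 4, ∑ b : Fin 4, ∑ c : Fin 4, ((BHz a b c : ℤ) : ℝ) ^ 2)
        = (270336 : ℝ) := by
      exact_mod_cast congrArg (fun z : ℤ => (z : ℝ)) BHz_sq
    rw [hsq, ← hNdef]
    ring
  -- key1 : cross term of Y against X - Y/384 vanishes
  have key1 : ∀ C' ∈ 𝒞, ∀ C ∈ 𝒞,
      (∑ φ : V → Fin 4, BHf φ C' * (weight φ C - BHf φ C / 384)) = 0 := by
    intro C' hC' C hC
    obtain ⟨x, y, _, hux, huy, hxy, _, hh'⟩ := hrepW C' hC'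
    obtain ⟨q, r, _, h1q, h1r, hqr, hw, hh⟩ := hrepW C hC
    have hzrep : ∀ φ : V → Fin 4, weight φ C - BHf φ C / 384
        = (((BJ1z (φ q) (φ r) : ℤ) : ℝ) + ((BJ2z (φ C.1) (φ r) : ℤ) : ℝ)
            + ((BJ3z (φ C.1) (φ q) : ℤ) : ℝ)) / 384 := by
      intro φ
      rw [hw φ, hh φ]
      have hd : ((64 : ℝ) * ((BWz (φ C.1) (φ q) (φ r) : ℤ) : ℝ))
          = ((BHz (φ C.1) (φ q) (φ r) : ℤ) : ℝ) + ((BJ1z (φ q) (φ r) : ℤ) : ℝ)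
            + ((BJ2z (φ C.1) (φ r) : ℤ) : ℝ) + ((BJ3z (φ C.1) (φ q) : ℤ) : ℝ) := by
        exact_mod_cast Bdecomp (φ C.1) (φ q) (φ r)
      linarith
    have split : (∑ φ : V → Fin 4, BHf φ C' * (weight φ C - BHf φ C / 384))
        = ((∑ φ : V → Fin 4, ((BHz (φ C'.1) (φ x) (φ y) : ℤ) : ℝ)
              * ((BJ1z (φ q) (φ r) : ℤ) : ℝ))
          + (∑ φ : V → Fin 4, ((BHz (φ C'.1) (φ x) (φ y) : ℤ) : ℝ)
              * ((BJ2z (φ C.1) (φ r) : ℤ) : ℝ))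
          + (∑ φ : V → Fin 4, ((BHz (φ C'.1) (φ x) (φ y) : ℤ) : ℝ)
              * ((BJ3z (φ C.1) (φ q) : ℤ) : ℝ))) / 384 := by
      rw [← Finset.sum_add_distrib, ← Finset.sum_add_distrib, Finset.sum_div]
      apply Finset.sum_congr rfl
      intro φ _
      rw [hzrep φ, hh' φ]
      ring
    rw [split]
    obtain ⟨v1, hv1, hv1a, hv1b⟩ := Bexists_avoid C'.1 x y q r hux huy hxy
    obtain ⟨v2, hv2, hv2a, hv2b⟩ := Bexists_avoid C'.1 x y C.1 r hux huy hxy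
    obtain ⟨v3, hv3, hv3a, hv3b⟩ := Bexists_avoid C'.1 x y C.1 q hux huy hxy
    rw [Bsum_h_mul_zero C'.1 x y hux huy hxy
        (fun φ => ((BJ1z (φ q) (φ r) : ℤ) : ℝ)) v1 hv1 (by
          intro φ a
          simp only [Function.update_of_ne hv1a.symm, Function.update_of_ne hv1b.symm]),
      Bsum_h_mul_zero C'.1 x y hux huy hxy
        (fun φ => ((BJ2z (φ C.1) (φ r) : ℤ) : ℝ)) v2 hv2 (by
          intro φ a
          simp only [Function.update_of_ne hv2a.symm, Function.update_of_ne hv2b.symm]),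
      Bsum_h_mul_zero C'.1 x y hux huy hxy
        (fun φ => ((BJ3z (φ C.1) (φ q) : ℤ) : ℝ)) v3 hv3 (by
          intro φ a
          simp only [Function.update_of_ne hv3a.symm, Function.update_of_ne hv3b.symm])]
    norm_num
  -- key2 : per-constraint lower bound on erase-sum of h-products
  have key2 : ∀ C ∈ 𝒞,
      (-2112 : ℝ) * N ≤ ∑ C' ∈ 𝒞.erase C, ∑ φ : V → Fin 4, BHf φ C * BHf φ C' := by
    intro C hC
    obtain ⟨q, r, hCrep, hpq, hpr, hqr, _, hh⟩ := hrepW C hC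
    have hval : ∀ C' ∈ 𝒞.erase C, (∑ φ : V → Fin 4, BHf φ C * BHf φ C')
        = if C' = (q, s(C.1, r)) ∨ C' = (r, s(C.1, q)) then (-2112 : ℝ) * N else 0 := by
      intro C' hC'
      have hC'mem := Finset.mem_of_mem_erase hC'
      have hne : C' ≠ C := Finset.ne_of_mem_erase hC'
      obtain ⟨x, y, hC'rep, hux, huy, hxy, _, hh'⟩ := hrepW C' hC'mem
      have hes : C'.2 = s(x, y) := by rw [hC'rep]
      rcases Btriple_cases C.1 q r C'.1 x y hpq hpr hqr hux huy hxy with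
        ⟨v, hv, hv1, hv2, hv3⟩ | ⟨v, hv, hv1, hv2, hv3⟩ | hsame
      · -- a variable of C' is outside C's triple : product sum vanishes
        rw [if_neg, show (∑ φ : V → Fin 4, BHf φ C * BHf φ C') = 0 from ?_]
        · have : (∑ φ : V → Fin 4, BHf φ C * BHf φ C')
              = ∑ φ : V → Fin 4, ((BHz (φ C'.1) (φ x) (φ y) : ℤ) : ℝ)
                  * ((BHz (φ C.1) (φ q) (φ r) : ℤ) : ℝ) := by
            apply Finset.sum_congr rfl
            intro φ _
            rw [hh φ, hh' φ]; ring
          rw [this]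
          exact Bsum_h_mul_zero C'.1 x y hux huy hxy
            (fun φ => ((BHz (φ C.1) (φ q) (φ r) : ℤ) : ℝ)) v hv (by
              intro φ a
              simp only [Function.update_of_ne hv1.symm, Function.update_of_ne hv2.symm,
                Function.update_of_ne hv3.symm])
        · rintro (hce | hce)
          · have h1 : C'.1 = q := by rw [hce]
            have he2 : s(x, y) = s(C.1, r) := by rw [← hes, hce]
            rcases Sym2.eq_iff.mp he2 with ⟨hxx, hyy⟩ | ⟨hxx, hyy⟩ <;>
              rcases hv with rfl | rfl | rfl
            · exact hv2 h1
            · exact hv1 hxx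
            · exact hv3 hyy
            · exact hv2 h1
            · exact hv3 hxx
            · exact hv1 hyy
          · have h1 : C'.1 = r := by rw [hce]
            have he2 : s(x, y) = s(C.1, q) := by rw [← hes, hce]
            rcases Sym2.eq_iff.mp he2 with ⟨hxx, hyy⟩ | ⟨hxx, hyy⟩ <;>
              rcases hv with rfl | rfl | rfl
            · exact hv3 h1
            · exact hv1 hxx
            · exact hv2 hyy
            · exact hv3 h1
            · exact hv2 hxx
            · exact hv1 hyy
      · -- a variable of C is outside C''s triple : product sum vanishes
        rw [if_neg, show (∑ φ : V → Fin 4, BHf φ C * BHf φ C') = 0 from ?_]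
        · have : (∑ φ : V → Fin 4, BHf φ C * BHf φ C')
              = ∑ φ : V → Fin 4, ((BHz (φ C.1) (φ q) (φ r) : ℤ) : ℝ)
                  * ((BHz (φ C'.1) (φ x) (φ y) : ℤ) : ℝ) := by
            apply Finset.sum_congr rfl
            intro φ _
            rw [hh φ, hh' φ]
          rw [this]
          exact Bsum_h_mul_zero C.1 q r hpq hpr hqr
            (fun φ => ((BHz (φ C'.1) (φ x) (φ y) : ℤ) : ℝ)) v hv (by
              intro φ a
              simp only [Function.update_of_ne hv1.symm, Function.update_of_ne hv2.symm,
                Function.update_of_ne hv3.symm])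
        · rintro (hce | hce)
          · have h1 : C'.1 = q := by rw [hce]
            have he2 : s(x, y) = s(C.1, r) := by rw [← hes, hce]
            rcases Sym2.eq_iff.mp he2 with ⟨hxx, hyy⟩ | ⟨hxx, hyy⟩ <;>
              rcases hv with rfl | rfl | rfl
            · exact hv2 hxx.symm
            · exact hv1 h1.symm
            · exact hv3 hyy.symm
            · exact hv3 hyy.symm
            · exact hv1 h1.symm
            · exact hv2 hxx.symm
          · have h1 : C'.1 = r := by rw [hce]
            have he2 : s(x, y) = s(C.1, q) := by rw [← hes, hce]
            rcases Sym2.eq_iff.mp he2 with ⟨hxx, hyy⟩ | ⟨hxx, hyy⟩ <;>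
              rcases hv with rfl | rfl | rfl
            · exact hv2 hxx.symm
            · exact hv3 hyy.symm
            · exact hv1 h1.symm
            · exact hv3 hyy.symm
            · exact hv2 hxx.symm
            · exact hv1 h1.symm
      · rcases hsame with ⟨he1, he2⟩ | ⟨he1, he2⟩ | ⟨he1, he2⟩
        · exfalso
          apply hne
          rw [hC'rep, he1, he2, ← hCrep]
        · have hceq : C' = (q, s(C.1, r)) := by rw [hC'rep, he1, he2]
          rw [if_pos (Or.inl hceq)]
          have hrw : (∑ φ : V → Fin 4, BHf φ C * BHf φ C')
              = ∑ φ : V → Fin 4, ((BHz (φ C.1) (φ q) (φ r) : ℤ) : ℝ)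
                  * ((BHz (φ q) (φ C.1) (φ r) : ℤ) : ℝ) := by
            apply Finset.sum_congr rfl
            intro φ _
            rw [hh φ, hceq, BHf_eq]
          rw [hrw, Bsum_junta3
            (fun a b c => ((BHz a b c : ℤ) : ℝ) * ((BHz b a c : ℤ) : ℝ)) C.1 q r hpq hpr hqr]
          have hcr : (∑ a : Fin 4, ∑ b : Fin 4, ∑ c : Fin 4,
              ((BHz a b c : ℤ) : ℝ) * ((BHz b a c : ℤ) : ℝ)) = (-135168 : ℝ) := by
            exact_mod_cast congrArg (fun z : ℤ => (z : ℝ)) BHz_cross1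
          rw [hcr, ← hNdef]
          ring
        · have hceq : C' = (r, s(C.1, q)) := by rw [hC'rep, he1, he2]
          rw [if_pos (Or.inr hceq)]
          have hrw : (∑ φ : V → Fin 4, BHf φ C * BHf φ C')
              = ∑ φ : V → Fin 4, ((BHz (φ C.1) (φ q) (φ r) : ℤ) : ℝ)
                  * ((BHz (φ r) (φ C.1) (φ q) : ℤ) : ℝ) := by
            apply Finset.sum_congr rfl
            intro φ _
            rw [hh φ, hceq, BHf_eq]
          rw [hrw, Bsum_junta3
            (fun a b c => ((BHz a b c : ℤ) : ℝ) * ((BHz c a b : ℤ) : ℝ)) C.1 q r hpq hpr hqr]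
          have hcr : (∑ a : Fin 4, ∑ b : Fin 4, ∑ c : Fin 4,
              ((BHz a b c : ℤ) : ℝ) * ((BHz c a b : ℤ) : ℝ)) = (-135168 : ℝ) := by
            exact_mod_cast congrArg (fun z : ℤ => (z : ℝ)) BHz_cross2
          rw [hcr, ← hNdef]
          ring
    -- sum the values
    rw [Finset.sum_congr rfl hval, ← Finset.sum_filter]
    rw [Finset.sum_const]
    have hcard : ((𝒞.erase C).filter
        fun C' => C' = (q, s(C.1, r)) ∨ C' = (r, s(C.1, q))).card ≤ 1 := by
      apply Finset.card_le_one.mpr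
      intro a ha b hb
      rw [Finset.mem_filter] at ha hb
      by_contra hab
      have hboth : (q, s(C.1, r)) ∈ 𝒞 ∧ (r, s(C.1, q)) ∈ 𝒞 := by
        rcases ha.2 with h1 | h1 <;> rcases hb.2 with h2 | h2
        · exact absurd (h1.trans h2.symm) hab
        · exact ⟨h1 ▸ Finset.mem_of_mem_erase ha.1, h2 ▸ Finset.mem_of_mem_erase hb.1⟩
        · exact ⟨h2 ▸ Finset.mem_of_mem_erase hb.1, h1 ▸ Finset.mem_of_mem_erase ha.1⟩
        · exact absurd (h1.trans h2.symm) hab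
      apply hirr
      refine ⟨C.1, q, r, hpq, hpr, hqr, ?_⟩
      intro t ht
      simp only [completeTriple, Finset.mem_insert, Finset.mem_singleton] at ht
      rcases ht with rfl | rfl | rfl
      · rw [← hCrep]; exact hC
      · exact hboth.1
      · exact hboth.2
    rcases Nat.le_one_iff_eq_zero_or_eq_one.mp hcard with h | h <;> rw [h]
    · simp only [zero_smul]
      nlinarith [hNpos]
    · simp only [one_smul]
      exact le_refl _
  -- expansion of the double sum
  have expand : (∑ C ∈ 𝒞, ∑ C' ∈ 𝒞.erase C, ∑ φ : V → Fin 4, weight φ C * weight φ C')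
      = (∑ φ : V → Fin 4, (∑ C ∈ 𝒞, weight φ C) ^ 2)
        - ∑ C ∈ 𝒞, ∑ φ : V → Fin 4, (weight φ C) ^ 2 := by
    have h1 : (∑ φ : V → Fin 4, (∑ C ∈ 𝒞, weight φ C) ^ 2)
        = ∑ C ∈ 𝒞, ∑ C' ∈ 𝒞, ∑ φ : V → Fin 4, weight φ C * weight φ C' := by
      have hpt : ∀ φ : V → Fin 4, (∑ C ∈ 𝒞, weight φ C) ^ 2
          = ∑ C ∈ 𝒞, ∑ C' ∈ 𝒞, weight φ C * weight φ C' := by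
        intro φ; rw [sq, Finset.sum_mul_sum]
      rw [Finset.sum_congr rfl fun φ _ => hpt φ, Finset.sum_comm]
      apply Finset.sum_congr rfl
      intro C _
      rw [Finset.sum_comm]
    have h2 : ∀ C ∈ 𝒞, (∑ C' ∈ 𝒞, ∑ φ : V → Fin 4, weight φ C * weight φ C')
        = (∑ φ : V → Fin 4, (weight φ C) ^ 2)
          + ∑ C' ∈ 𝒞.erase C, ∑ φ : V → Fin 4, weight φ C * weight φ C' := by
      intro C hC
      rw [← Finset.add_sum_erase 𝒞 _ hC]
      congr 1
      apply Finset.sum_congr rfl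
      intro φ _
      rw [sq]
    rw [h1, Finset.sum_congr rfl h2, Finset.sum_add_distrib]
    ring
  -- vanishing of the global cross term
  have key1' : (∑ φ : V → Fin 4, (∑ C' ∈ 𝒞, BHf φ C')
      * ((∑ C ∈ 𝒞, weight φ C) - (∑ C ∈ 𝒞, BHf φ C) / 384)) = 0 := by
    have hpt : ∀ φ : V → Fin 4, (∑ C' ∈ 𝒞, BHf φ C')
        * ((∑ C ∈ 𝒞, weight φ C) - (∑ C ∈ 𝒞, BHf φ C) / 384)
        = ∑ C' ∈ 𝒞, ∑ C ∈ 𝒞, BHf φ C' * (weight φ C - BHf φ C / 384) := by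
      intro φ
      have hz : (∑ C ∈ 𝒞, weight φ C) - (∑ C ∈ 𝒞, BHf φ C) / 384
          = ∑ C ∈ 𝒞, (weight φ C - BHf φ C / 384) := by
        rw [Finset.sum_sub_distrib, ← Finset.sum_div]
      rw [hz, Finset.sum_mul_sum]
    rw [Finset.sum_congr rfl fun φ _ => hpt φ, Finset.sum_comm]
    apply Finset.sum_eq_zero
    intro C' hC'
    rw [Finset.sum_comm]
    apply Finset.sum_eq_zero
    intro C hC
    exact key1 C' hC' C hC
  -- lower bound on the sum of squares of Y
  have key2' : 2112 * (m : ℝ) * N ≤ ∑ φ : V → Fin 4, (∑ C ∈ 𝒞, BHf φ C) ^ 2 := by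
    have h1 : (∑ φ : V → Fin 4, (∑ C ∈ 𝒞, BHf φ C) ^ 2)
        = ∑ C ∈ 𝒞, ∑ C' ∈ 𝒞, ∑ φ : V → Fin 4, BHf φ C * BHf φ C' := by
      have hpt : ∀ φ : V → Fin 4, (∑ C ∈ 𝒞, BHf φ C) ^ 2
          = ∑ C ∈ 𝒞, ∑ C' ∈ 𝒞, BHf φ C * BHf φ C' := by
        intro φ; rw [sq, Finset.sum_mul_sum]
      rw [Finset.sum_congr rfl fun φ _ => hpt φ, Finset.sum_comm]
      apply Finset.sum_congr rfl
      intro C _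
      rw [Finset.sum_comm]
    have h2 : ∀ C ∈ 𝒞, (∑ C' ∈ 𝒞, ∑ φ : V → Fin 4, BHf φ C * BHf φ C')
        = (∑ φ : V → Fin 4, (BHf φ C) ^ 2)
          + ∑ C' ∈ 𝒞.erase C, ∑ φ : V → Fin 4, BHf φ C * BHf φ C' := by
      intro C hC
      rw [← Finset.add_sum_erase 𝒞 _ hC]
      congr 1
      apply Finset.sum_congr rfl
      intro φ _
      rw [sq]
    rw [h1, Finset.sum_congr rfl h2]
    have hterm : ∀ C ∈ 𝒞, (2112 : ℝ) * N ≤ (∑ φ : V → Fin 4, (BHf φ C) ^ 2)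
        + ∑ C' ∈ 𝒞.erase C, ∑ φ : V → Fin 4, BHf φ C * BHf φ C' := by
      intro C hC
      have := key2 C hC
      rw [fact2 C hC]
      linarith
    calc (2112 : ℝ) * (m : ℝ) * N = ∑ _C ∈ 𝒞, (2112 : ℝ) * N := by
          rw [Finset.sum_const, hm, nsmul_eq_mul]; ring
      _ ≤ _ := Finset.sum_le_sum hterm
  -- lower bound on the sum of squares of X
  have keyX : (∑ φ : V → Fin 4, (∑ C ∈ 𝒞, BHf φ C) ^ 2) / 147456
      ≤ ∑ φ : V → Fin 4, (∑ C ∈ 𝒞, weight φ C) ^ 2 := by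
    have hsum : (∑ φ : V → Fin 4, (∑ C ∈ 𝒞, weight φ C) ^ 2)
        = (∑ φ : V → Fin 4, (∑ C ∈ 𝒞, BHf φ C) ^ 2) / 147456
          + (∑ φ : V → Fin 4,
              ((∑ C ∈ 𝒞, weight φ C) - (∑ C ∈ 𝒞, BHf φ C) / 384) ^ 2)
          + (1 / 192) * (∑ φ : V → Fin 4, (∑ C' ∈ 𝒞, BHf φ C')
              * ((∑ C ∈ 𝒞, weight φ C) - (∑ C ∈ 𝒞, BHf φ C) / 384)) := by
      rw [Finset.mul_sum, Finset.sum_div, ← Finset.sum_add_distrib, ← Finset.sum_add_distrib]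
      apply Finset.sum_congr rfl
      intro φ _
      ring
    have hnn : (0 : ℝ) ≤ ∑ φ : V → Fin 4,
        ((∑ C ∈ 𝒞, weight φ C) - (∑ C ∈ 𝒞, BHf φ C) / 384) ^ 2 :=
      Finset.sum_nonneg fun φ _ => sq_nonneg _
    rw [hsum, key1']
    linarith
  -- final assembly
  have hgoal : (∑ C ∈ 𝒞, ∑ C' ∈ 𝒞.erase C,
      (∑ φ : V → Fin 4, weight φ C * weight φ C') / 4 ^ Fintype.card V)
      = (∑ C ∈ 𝒞, ∑ C' ∈ 𝒞.erase C, ∑ φ : V → Fin 4, weight φ C * weight φ C') / N := by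
    rw [Finset.sum_div]
    apply Finset.sum_congr rfl
    intro C _
    rw [Finset.sum_div]
  rw [hgoal, expand]
  have hD : (∑ C ∈ 𝒞, ∑ φ : V → Fin 4, (weight φ C) ^ 2) = (m : ℝ) * (11 / 96 * N) := by
    rw [Finset.sum_congr rfl fact1, Finset.sum_const, hm, nsmul_eq_mul]
  rw [hD, le_div_iff₀ hNpos]
  have hT : 2112 * (m : ℝ) * N / 147456 ≤ ∑ φ : V → Fin 4, (∑ C ∈ 𝒞, weight φ C) ^ 2 := by
    calc 2112 * (m : ℝ) * N / 147456
        ≤ (∑ φ : V → Fin 4, (∑ C ∈ 𝒞, BHf φ C) ^ 2) / 147456 := by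
          linarith [key2']
      _ ≤ _ := keyX
  nlinarith [hT]

end
end

section
/- Let V be a finite set and let C_l = (v_i, {v_j, v_k}) and C_{l′} = (v_{i′}, {v_{j′}, v_{k′}}) be two betweenness constraints over V whose variable sets {v_i, v_j, v_k} and {v_{i′}, v_{j′}, v_{k′}} are disjoint. Then E[w(C_l, φ)·w(C_{l′}, φ)] = 0, where the expectation is over φ chosen uniformly at random from the 4^{|V|} functions V → {0,1,2,3}. -/
open scoped Classical

noncomputable section

/-!
For a uniformly random `φ : V → Fin 4`, the weight of a constraint depends only on the values of
`φ` at its three variables, so the weights of two constraints on disjoint variable sets are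
independent and the expectation of their product is the product of their expectations. Each of
these vanishes: of the 64 value patterns on `(vᵢ, vⱼ, vₖ)`, 12 have `vⱼ = vₖ ≠ vᵢ`, 24 have `vⱼ ≠ vₖ`
and `vᵢ ∈ {vⱼ, vₖ}`, 8 are pairwise distinct with `vᵢ` in the middle and 16 are pairwise distinct
otherwise, and `12 · (-1/3) + 24 · (1/6) + 8 · (2/3) + 16 · (-1/3) = 0`.
-/

open Function

lemma Sym2.exists_eq_mk_and_lt_and_lt_iff {α : Type*} [LinearOrder α] (a b c : α) :
    (∃ x y, s(b, c) = s(x, y) ∧ x < a ∧ a < y) ↔ b < a ∧ a < c ∨ c < a ∧ a < b := by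
  constructor
  · rintro ⟨x, y, hxy, hx, hy⟩
    rcases Sym2.eq_iff.1 hxy with ⟨rfl, rfl⟩ | ⟨rfl, rfl⟩ <;> simp [*]
  · rintro (h | h)
    · exact ⟨b, c, rfl, h⟩
    · exact ⟨c, b, Sym2.eq_swap, h⟩

lemma Fin.sum_univ_three_fun {α M : Type*} [Fintype α] [AddCommMonoid M] (f : (Fin 3 → α) → M) :
    ∑ ψ, f ψ = ∑ a, ∑ b, ∑ c, f ![a, b, c] := by
  rw [← (Fin.consEquiv _).sum_comp, Fintype.sum_prod_type]
  refine Fintype.sum_congr _ _ fun a => ?_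
  rw [← (Fin.consEquiv _).sum_comp, Fintype.sum_prod_type]
  refine Fintype.sum_congr _ _ fun b => ?_
  rw [← (Fin.consEquiv _).sum_comp, Fintype.sum_prod_type]
  refine Fintype.sum_congr _ _ fun c => ?_
  rw [Fintype.sum_unique]
  rfl

lemma injective_triple_of_ne {α : Type*} {x y z : α} (hxy : x ≠ y) (hxz : x ≠ z)
    (hyz : y ≠ z) : Injective ![x, y, z] := by
  simp only [Matrix.vecCons, Fin.cons_injective_iff]
  simp [*, injective_of_subsingleton]

lemma weight_comp {V W : Type*} (φ : W → Fin 4) (e : V → W) (C : Constraint V) :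
    weight (φ ∘ e) C = weight φ (e C.1, C.2.map e) := by
  simp [weight, Sym2.map_map]

lemma sum_weight_eq_zero : ∑ ψ : Fin 3 → Fin 4, weight ψ (0, s(1, 2)) = 0 := by
  simp only [Fin.sum_univ_three_fun, weight, Sym2.map_mk, Sym2.exists_eq_mk_and_lt_and_lt_iff]
  simp [Fin.sum_univ_four]
  norm_num

lemma Function.extend_comp_self_extend {α β γ : Sort*} {e : α → β} (he : Injective e)
    (φ : β → γ) (ψ : α → γ) : extend e (φ ∘ e) (extend e ψ φ) = φ := by
  funext i
  by_cases hi : ∃ k, e k = i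
  · obtain ⟨k, rfl⟩ := hi
    rw [he.extend_apply, comp_apply]
  · rw [extend_apply' _ _ _ hi, extend_apply' _ _ _ hi]

section

variable {ι κ α : Type*} [Fintype ι] [DecidableEq ι] [Fintype κ] [DecidableEq κ] [Fintype α]

lemma card_nsmul_sum_comp {M : Type*} [AddCommMonoid M] {e : κ → ι} (he : Injective e)
    (F : (κ → α) → M) :
    Fintype.card (κ → α) • ∑ φ : ι → α, F (φ ∘ e) = Fintype.card (ι → α) • ∑ ψ, F ψ := by
  -- `T (φ, ψ) = (φ overwritten by ψ on the range of e, φ ∘ e)`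
  let T : Equiv.Perm ((ι → α) × (κ → α)) :=
    Involutive.toPerm (fun p => (extend e p.2 p.1, p.1 ∘ e)) fun p =>
      Prod.ext (extend_comp_self_extend he p.1 p.2) (extend_comp he p.2 p.1)
  calc Fintype.card (κ → α) • ∑ φ : ι → α, F (φ ∘ e)
      = ∑ p : (ι → α) × (κ → α), F (p.1 ∘ e) := by
        simp [Fintype.sum_prod_type, Finset.smul_sum]
    _ = ∑ p : (ι → α) × (κ → α), F p.2 := Equiv.sum_comp T fun p => F p.2
    _ = Fintype.card (ι → α) • ∑ ψ, F ψ := by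
        simp [Fintype.sum_prod_type]

lemma card_nsmul_sum_mul_comp {κ' R : Type*} [Fintype κ'] [DecidableEq κ'] [CommSemiring R]
    {e : κ → ι} {e' : κ' → ι} (he : Injective (Sum.elim e e')) (F : (κ → α) → R)
    (G : (κ' → α) → R) :
    Fintype.card (κ ⊕ κ' → α) • ∑ φ : ι → α, F (φ ∘ e) * G (φ ∘ e') =
      Fintype.card (ι → α) • ((∑ ψ, F ψ) * ∑ ψ', G ψ') := by
  rw [Finset.sum_mul_sum, ← Fintype.sum_prod_type',
    ← (Equiv.sumArrowEquivProdArrow _ _ _).sum_comp]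
  exact card_nsmul_sum_comp he fun ψ => F (ψ ∘ Sum.inl) * G (ψ ∘ Sum.inr)

end

theorem expectation_product_disjoint_vars
    {V : Type*} [Fintype V] [DecidableEq V]
    (vi vj vk vi' vj' vk' : V)
    (h1 : vi ≠ vj) (h2 : vi ≠ vk) (h3 : vj ≠ vk)
    (h4 : vi' ≠ vj') (h5 : vi' ≠ vk') (h6 : vj' ≠ vk')
    (hdisj : ({vi, vj, vk} : Set V) ∩ {vi', vj', vk'} = ∅) :
    (∑ φ : V → Fin 4,
        weight φ (vi, s(vj, vk)) * weight φ (vi', s(vj', vk')))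
      / 4 ^ Fintype.card V = 0 := by
  have he : Injective (Sum.elim ![vi, vj, vk] ![vi', vj', vk']) := by
    refine .sumElim (injective_triple_of_ne h1 h2 h3) (injective_triple_of_ne h4 h5 h6) ?_
    rw [← Set.disjoint_range_iff, Set.disjoint_iff_inter_eq_empty]
    rwa [Matrix.range_cons, Matrix.range_cons_cons_empty, Set.singleton_union, Matrix.range_cons,
      Matrix.range_cons_cons_empty, Set.singleton_union]
  have hprod := card_nsmul_sum_mul_comp he (fun ψ => weight ψ (0, s(1, 2)))
    (fun ψ => weight ψ (0, s(1, 2)))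
  rw [sum_weight_eq_zero, zero_mul, smul_zero, smul_eq_zero] at hprod
  simp only [weight_comp, Sym2.map_mk, Matrix.cons_val] at hprod
  rw [hprod.resolve_left Fintype.card_ne_zero, zero_div]
end
end

section
/- Let X be a real random variable (on a probability space, with X^4 integrable) whose first, second and fourth moments satisfy E[X] = 0, E[X^2] = σ^2 > 0 and E[X^4] ≤ b·σ^4 for some real b > 0. Then P(X > σ/(4√b)) ≥ 1/(4^{4/3}·b). -/
/-!
Hölder's inequality with exponents `3/2` and `3` gives `E[X²]³ ≤ E[|X|]² E[X⁴]`, hence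
`E|X| ≥ σ/√b = 4θ` for `θ = σ/(4√b)`. Since `E X = 0`, `E[max X 0] = E|X|/2 ≥ 2θ`, and
`max X 0 ≤ θ + X·1_{X>θ}` then forces `E[|X|·1_{X>θ}] ≥ θ`. Hölder with exponents `4` and `4/3`
bounds this by `E[X⁴]^{1/4} P(X > θ)^{3/4} ≤ b^{1/4} σ P(X > θ)^{3/4}`, and solving for the
probability gives the bound.
-/

open MeasureTheory
open scoped ProbabilityTheory

section

variable {α : Type*} [MeasurableSpace α] {μ : Measure α}

theorem integral_rpow_mul_rpow_le {f g : α → ℝ} (hf₀ : 0 ≤ᵐ[μ] f) (hg₀ : 0 ≤ᵐ[μ] g)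
    (hf : Integrable f μ) (hg : Integrable g μ) {p q : ℝ} (hp : 0 ≤ p) (hq : 0 ≤ q)
    (hpq : p + q = 1) :
    ∫ a, f a ^ p * g a ^ q ∂μ ≤ (∫ a, f a ∂μ) ^ p * (∫ a, g a ∂μ) ^ q := by
  have hfg₀ : 0 ≤ᵐ[μ] fun a => f a ^ p * g a ^ q := by
    filter_upwards [hf₀, hg₀] with a hfa hga
    exact mul_nonneg (Real.rpow_nonneg hfa p) (Real.rpow_nonneg hga q)
  have hfg : AEStronglyMeasurable (fun a => f a ^ p * g a ^ q) μ :=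
    ((hf.1.aemeasurable.pow_const p).mul (hg.1.aemeasurable.pow_const q)).aestronglyMeasurable
  have hlin : ∫⁻ a, ENNReal.ofReal (f a ^ p * g a ^ q) ∂μ
      = ∫⁻ a, ENNReal.ofReal (f a) ^ p * ENNReal.ofReal (g a) ^ q ∂μ := by
    refine lintegral_congr_ae ?_
    filter_upwards [hf₀, hg₀] with a hfa hga
    rw [ENNReal.ofReal_rpow_of_nonneg hfa hp, ENNReal.ofReal_rpow_of_nonneg hga hq,
      ENNReal.ofReal_mul (Real.rpow_nonneg hfa p)]
  rw [integral_eq_lintegral_of_nonneg_ae hfg₀ hfg, integral_eq_lintegral_of_nonneg_ae hf₀ hf.1,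
    integral_eq_lintegral_of_nonneg_ae hg₀ hg.1, ENNReal.toReal_rpow, ENNReal.toReal_rpow,
    ← ENNReal.toReal_mul, hlin]
  refine ENNReal.toReal_mono ?_ (ENNReal.lintegral_mul_norm_pow_le
    hf.1.aemeasurable.ennreal_ofReal hg.1.aemeasurable.ennreal_ofReal hp hq hpq)
  exact ENNReal.mul_ne_top (ENNReal.rpow_ne_top_of_nonneg hp hf.lintegral_lt_top.ne)
    (ENNReal.rpow_ne_top_of_nonneg hq hg.lintegral_lt_top.ne)

theorem integrable_of_integrable_pow_four [IsFiniteMeasure μ] {X : α → ℝ}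
    (hX : AEStronglyMeasurable X μ) (hX4 : Integrable (fun a => X a ^ 4) μ) :
    Integrable X μ :=
  ((integrable_const 1).add hX4).mono' hX (ae_of_all μ fun a => by
    show |X a| ≤ 1 + X a ^ 4
    nlinarith [sq_abs (X a), sq_nonneg (X a ^ 2 - 1 / 2), sq_nonneg (|X a| - 1 / 2)])

theorem integral_sq_pow_three_le {X : α → ℝ} (hX : Integrable X μ)
    (hX4 : Integrable (fun a => X a ^ 4) μ) :
    (∫ a, X a ^ 2 ∂μ) ^ 3 ≤ (∫ a, |X a| ∂μ) ^ 2 * ∫ a, X a ^ 4 ∂μ := by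
  have hsplit (x : ℝ) : |x| ^ (2 / 3 : ℝ) * (x ^ 4) ^ (1 / 3 : ℝ) = x ^ 2 := by
    rw [← Even.pow_abs ⟨2, rfl⟩, ← Real.rpow_natCast_mul (abs_nonneg x),
      ← Real.rpow_add' (abs_nonneg x) (by norm_num)]
    norm_num
  have h := integral_rpow_mul_rpow_le (ae_of_all μ fun a => abs_nonneg (X a))
    (ae_of_all μ fun a => by positivity) hX.abs hX4 (by norm_num) (by norm_num)
    (by norm_num : (2 / 3 : ℝ) + 1 / 3 = 1)
  simp only [hsplit] at h
  calc (∫ a, X a ^ 2 ∂μ) ^ 3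
      ≤ ((∫ a, |X a| ∂μ) ^ (2 / 3 : ℝ) * (∫ a, X a ^ 4 ∂μ) ^ (1 / 3 : ℝ)) ^ 3 :=
        pow_le_pow_left₀ (integral_nonneg fun a => by positivity) h 3
    _ = (∫ a, |X a| ∂μ) ^ 2 * ∫ a, X a ^ 4 ∂μ := by
        rw [mul_pow, ← Real.rpow_mul_natCast (integral_nonneg fun a => abs_nonneg _),
          ← Real.rpow_mul_natCast (integral_nonneg fun a => by positivity)]
        norm_num

theorem div_sqrt_le_integral_abs {X : α → ℝ} (hX : Integrable X μ)
    (hX4 : Integrable (fun a => X a ^ 4) μ) {σ b : ℝ} (hσ : 0 < σ) (hb : 0 < b)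
    (h2 : ∫ a, X a ^ 2 ∂μ = σ ^ 2) (h4 : ∫ a, X a ^ 4 ∂μ ≤ b * σ ^ 4) :
    σ / Real.sqrt b ≤ ∫ a, |X a| ∂μ := by
  set A := ∫ a, |X a| ∂μ
  have hA : 0 ≤ A := integral_nonneg fun a => abs_nonneg _
  have h := integral_sq_pow_three_le hX hX4
  rw [h2] at h
  have hσA : σ ^ 2 ≤ b * A ^ 2 := by
    have : σ ^ 4 * σ ^ 2 ≤ σ ^ 4 * (b * A ^ 2) := by
      nlinarith [mul_le_mul_of_nonneg_left h4 (sq_nonneg A)]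
    exact le_of_mul_le_mul_left this (by positivity)
  rw [← pow_le_pow_iff_left₀ (by positivity) hA two_ne_zero, div_pow,
    Real.sq_sqrt hb.le, div_le_iff₀ hb]
  linarith

theorem integral_abs_eq_two_mul_integral_max_zero {X : α → ℝ} (hX : Integrable X μ)
    (hmean : ∫ a, X a ∂μ = 0) :
    ∫ a, |X a| ∂μ = 2 * ∫ a, max (X a) 0 ∂μ := by
  have hmax (x : ℝ) : |x| = 2 * max x 0 - x := by
    rcases le_total 0 x with hx | hx
    · rw [abs_of_nonneg hx, max_eq_left hx]; ring
    · rw [abs_of_nonpos hx, max_eq_right hx]; ring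
  simp only [hmax]
  rw [integral_sub (hX.pos_part.const_mul 2) hX, integral_const_mul, hmean, sub_zero]

theorem integral_max_zero_le_add_setIntegral [IsProbabilityMeasure μ] {X : α → ℝ}
    (hXm : Measurable X) (hX : Integrable X μ) {θ : ℝ} (hθ : 0 ≤ θ) :
    ∫ a, max (X a) 0 ∂μ ≤ θ + ∫ a in {a | θ < X a}, X a ∂μ := by
  have hS : MeasurableSet {a | θ < X a} := measurableSet_lt measurable_const hXm
  have hθX : Integrable (fun a => θ + {a | θ < X a}.indicator X a) μ :=
    (integrable_const θ).add (hX.indicator hS)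
  calc ∫ a, max (X a) 0 ∂μ ≤ ∫ a, θ + {a | θ < X a}.indicator X a ∂μ :=
        integral_mono hX.pos_part hθX fun a => ?_
    _ = θ + ∫ a in {a | θ < X a}, X a ∂μ := by
        rw [integral_add (integrable_const θ) (hX.indicator hS), integral_indicator hS]
        simp
  by_cases ha : θ < X a
  · simp [ha, hθ, ha.le.trans' hθ]
  · simp [ha, hθ, not_lt.mp ha]

theorem setIntegral_abs_pow_four_le [IsFiniteMeasure μ] {X : α → ℝ}
    (hX4 : Integrable (fun a => X a ^ 4) μ) (s : Set α) :
    (∫ a in s, |X a| ∂μ) ^ 4 ≤ (∫ a, X a ^ 4 ∂μ) * μ.real s ^ 3 := by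
  have hsplit (x : ℝ) : (x ^ 4) ^ (1 / 4 : ℝ) * (1 : ℝ) ^ (3 / 4 : ℝ) = |x| := by
    rw [← Even.pow_abs ⟨2, rfl⟩, ← Real.rpow_natCast_mul (abs_nonneg x), Real.one_rpow]
    norm_num
  have h := integral_rpow_mul_rpow_le (μ := μ.restrict s) (g := fun _ => 1)
    (ae_of_all _ fun a => by positivity) (ae_of_all _ fun _ => zero_le_one)
    hX4.restrict (integrable_const 1) (by norm_num) (by norm_num)
    (by norm_num : (1 / 4 : ℝ) + 3 / 4 = 1)
  simp only [hsplit, setIntegral_const, smul_eq_mul, mul_one] at h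
  calc (∫ a in s, |X a| ∂μ) ^ 4
      ≤ ((∫ a in s, X a ^ 4 ∂μ) ^ (1 / 4 : ℝ) * μ.real s ^ (3 / 4 : ℝ)) ^ 4 :=
        pow_le_pow_left₀ (integral_nonneg fun a => abs_nonneg _) h 4
    _ = (∫ a in s, X a ^ 4 ∂μ) * μ.real s ^ 3 := by
        rw [mul_pow, ← Real.rpow_mul_natCast (integral_nonneg fun a => by positivity),
          ← Real.rpow_mul_natCast measureReal_nonneg]
        norm_num
    _ ≤ (∫ a, X a ^ 4 ∂μ) * μ.real s ^ 3 :=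
        mul_le_mul_of_nonneg_right
          (setIntegral_le_integral hX4 (ae_of_all μ fun a => by positivity)) (by positivity)

end

theorem le_of_div_four_mul_sqrt_pow_four_le {σ b P : ℝ} (hσ : 0 < σ) (hb : 0 < b) (hP : 0 ≤ P)
    (h : (σ / (4 * Real.sqrt b)) ^ 4 ≤ b * σ ^ 4 * P ^ 3) :
    1 / (4 ^ ((4 : ℝ) / 3) * b) ≤ P := by
  have hsqrt : Real.sqrt b ^ 4 = b ^ 2 := by
    rw [show 4 = 2 * 2 by rfl, pow_mul, Real.sq_sqrt hb.le]
  have hfour : ((4 : ℝ) ^ ((4 : ℝ) / 3)) ^ 3 = 4 ^ 4 := by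
    rw [← Real.rpow_mul_natCast (by norm_num)]
    norm_num
  rw [div_pow, mul_pow, hsqrt, div_le_iff₀ (by positivity)] at h
  rw [← pow_le_pow_iff_left₀ (by positivity) hP three_ne_zero, div_pow, mul_pow, hfour,
    one_pow, div_le_iff₀ (by positivity)]
  refine le_of_mul_le_mul_left ?_ (by positivity : 0 < σ ^ 4)
  linarith

theorem alon_gutin_krivelevich_moment_inequality
    {Ω : Type*} [MeasureSpace Ω] [IsProbabilityMeasure (ℙ : Measure Ω)]
    {X : Ω → ℝ} (hX : Measurable X)
    (hint : Integrable (fun ω => (X ω) ^ 4))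
    {σ b : ℝ} (hσ : 0 < σ) (hb : 0 < b)
    (h1 : (∫ ω, X ω) = 0)
    (h2 : (∫ ω, (X ω) ^ 2) = σ ^ 2)
    (h4 : (∫ ω, (X ω) ^ 4) ≤ b * σ ^ 4) :
    1 / (4 ^ ((4 : ℝ) / 3) * b) ≤ (ℙ {ω | σ / (4 * Real.sqrt b) < X ω}).toReal := by
  set θ := σ / (4 * Real.sqrt b)
  have hθ : 0 ≤ θ := by positivity
  have hXi : Integrable X := integrable_of_integrable_pow_four hX.aestronglyMeasurable hint
  have hmass : θ ≤ ∫ ω in {ω | θ < X ω}, |X ω| := by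
    have hA := div_sqrt_le_integral_abs hXi hint hσ hb h2 h4
    have hpos := integral_max_zero_le_add_setIntegral hX hXi hθ
    have habs : ∫ ω in {ω | θ < X ω}, X ω ≤ ∫ ω in {ω | θ < X ω}, |X ω| :=
      integral_mono hXi.restrict hXi.abs.restrict fun ω => le_abs_self (X ω)
    rw [integral_abs_eq_two_mul_integral_max_zero hXi h1] at hA
    have hθσ : σ / Real.sqrt b = 4 * θ := by
      simp only [θ]; field_simp
    linarith
  refine le_of_div_four_mul_sqrt_pow_four_le hσ hb ENNReal.toReal_nonneg ?_
  calc θ ^ 4 ≤ (∫ ω in {ω | θ < X ω}, |X ω|) ^ 4 := pow_le_pow_left₀ hθ hmass 4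
    _ ≤ (∫ ω, X ω ^ 4) * (ℙ {ω | θ < X ω}).toReal ^ 3 := setIntegral_abs_pow_four_le hint _
    _ ≤ b * σ ^ 4 * (ℙ {ω | θ < X ω}).toReal ^ 3 := by gcongr
end

section
/- Let f = f(x_1, …, x_n) be a real polynomial of total degree at most r in n variables. Let ε = (ε_1, …, ε_n) be chosen uniformly at random from {−1, 1}^n and set X = f(ε_1, …, ε_n). Then E[X^4] ≤ 2^{6r}·(E[X^2])^2. -/
/-!
Induction on the number of variables. On the cube, `f (x₀, x) = g x + x₀ h x`, where `g` and `h`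
collect the even and odd powers of `x₀` (so `deg g ≤ r` and `deg h ≤ r - 1`). Averaging over
`x₀ = ±1` gives `E f⁴ = E g⁴ + 6 E g²h² + E h⁴` and `E f² = E g² + E h²`; the inductive bounds
for `g` and `h` together with Cauchy–Schwarz for `E g²h²` close the induction with constant
`64 ^ r = 2 ^ (6 r)`.
-/

open MvPolynomial Finset
open scoped BigOperators

theorem pow_eq_ite_even_of_sq_eq_one {S : Type*} [Monoid S] {s : S} (hs : s ^ 2 = 1) (i : ℕ) :
    s ^ i = if Even i then 1 else s := by
  obtain ⟨k, rfl | rfl⟩ := Nat.even_or_odd' i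
  · simp [pow_mul, hs]
  · simp [pow_succ, pow_mul, hs, Nat.not_even_bit1]

namespace Polynomial

variable {R S : Type*} [Semiring R] [CommSemiring S]

def evenCoeffSum (p : R[X]) : R := ∑ i ∈ p.support with Even i, p.coeff i

def oddCoeffSum (p : R[X]) : R := ∑ i ∈ p.support with Odd i, p.coeff i

theorem eval₂_eq_evenCoeffSum_add_mul_oddCoeffSum (φ : R →+* S) {s : S} (hs : s ^ 2 = 1)
    (p : R[X]) : p.eval₂ φ s = φ p.evenCoeffSum + s * φ p.oddCoeffSum := by
  simp only [eval₂_eq_sum, Polynomial.sum_def, evenCoeffSum, oddCoeffSum, map_sum, mul_sum,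
    ← sum_filter_add_sum_filter_not p.support Even, Nat.not_even_iff_odd]
  congr 1 <;> refine sum_congr rfl fun i hi => ?_ <;>
    simp_all [pow_eq_ite_even_of_sq_eq_one hs, mul_comm]

end Polynomial

section finSuccEquiv

variable {R : Type*} [CommSemiring R] {n : ℕ}

theorem totalDegree_sum_coeff_finSuccEquiv_le (f : MvPolynomial (Fin (n + 1)) R)
    (s : Finset ℕ) {k : ℕ} (hs : ∀ i ∈ s, k ≤ i) :
    (∑ i ∈ s, (finSuccEquiv R n f).coeff i).totalDegree ≤ f.totalDegree - k := by
  refine totalDegree_finsetSum_le fun i hi => ?_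
  by_cases hc : (finSuccEquiv R n f).coeff i = 0
  · simp [hc]
  · have := totalDegree_coeff_finSuccEquiv_add_le f i hc
    have := hs i hi
    omega

theorem totalDegree_evenCoeffSum_finSuccEquiv_le (f : MvPolynomial (Fin (n + 1)) R) :
    (finSuccEquiv R n f).evenCoeffSum.totalDegree ≤ f.totalDegree :=
  totalDegree_sum_coeff_finSuccEquiv_le f _ (k := 0) fun _ _ => Nat.zero_le _

theorem totalDegree_oddCoeffSum_finSuccEquiv_le (f : MvPolynomial (Fin (n + 1)) R) :
    (finSuccEquiv R n f).oddCoeffSum.totalDegree ≤ f.totalDegree - 1 :=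
  totalDegree_sum_coeff_finSuccEquiv_le f _ fun _ hi => (mem_filter.mp hi).2.pos

end finSuccEquiv

noncomputable def signEval {σ : Type*} (f : MvPolynomial σ ℝ) (ε : σ → Bool) : ℝ :=
  eval (fun i => if ε i then 1 else -1) f

section signEval

variable {n : ℕ} (f : MvPolynomial (Fin (n + 1)) ℝ) (ε : Fin n → Bool)

theorem signEval_cons (b : Bool) :
    signEval f (Fin.cons b ε) = signEval (finSuccEquiv ℝ n f).evenCoeffSum ε +
      (if b then 1 else -1) * signEval (finSuccEquiv ℝ n f).oddCoeffSum ε := by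
  change eval ((fun b : Bool => if b then (1 : ℝ) else -1) ∘ Fin.cons b ε) f = _
  rw [Fin.comp_cons, eval_eq_eval_mv_eval', Polynomial.eval_map,
    Polynomial.eval₂_eq_evenCoeffSum_add_mul_oddCoeffSum _ (by cases b <;> norm_num)]
  rfl

theorem signEval_cons_true :
    signEval f (Fin.cons true ε) = signEval (finSuccEquiv ℝ n f).evenCoeffSum ε +
      signEval (finSuccEquiv ℝ n f).oddCoeffSum ε := by
  simp [signEval_cons]

theorem signEval_cons_false :
    signEval f (Fin.cons false ε) = signEval (finSuccEquiv ℝ n f).evenCoeffSum ε -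
      signEval (finSuccEquiv ℝ n f).oddCoeffSum ε := by
  simp [signEval_cons, sub_eq_add_neg]

end signEval

theorem Fintype.expect_bool {K : Type*} [Semifield K] [CharZero K] (g : Bool → K) :
    𝔼 b, g b = (g true + g false) / 2 := by
  rw [Fintype.expect_eq_sum_div_card]
  simp [add_comm]

theorem Fintype.expect_fin_succ_pi {α M : Type*} [Fintype α] [AddCommMonoid M] [Module ℚ≥0 M]
    {n : ℕ} (F : (Fin (n + 1) → α) → M) : 𝔼 x, F x = 𝔼 a, 𝔼 x, F (Fin.cons a x) := by
  rw [← Finset.expect_product', Finset.univ_product_univ]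
  exact Fintype.expect_equiv (Fin.consEquiv fun _ => α).symm _ _ fun x =>
    congrArg F (Fin.cons_self_tail x).symm

theorem expect_fin_succ_bool {K : Type*} [Semifield K] [CharZero K] {n : ℕ}
    (F : (Fin (n + 1) → Bool) → K) :
    𝔼 x, F x = 𝔼 x, (F (Fin.cons true x) + F (Fin.cons false x)) / 2 := by
  rw [Fintype.expect_fin_succ_pi, Finset.expect_comm]
  simp only [Fintype.expect_bool]

theorem expect_pow_four_le_of_forall_eq {ι : Type*} [Fintype ι] [Nonempty ι] {F : ι → ℝ} {c : ℝ}
    (hF : ∀ i, F i = c) {K : ℝ} (hK : 1 ≤ K) : 𝔼 i, F i ^ 4 ≤ K * (𝔼 i, F i ^ 2) ^ 2 := by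
  simp only [hF, Fintype.expect_const]
  nlinarith [pow_nonneg (sq_nonneg c) 2]

theorem expect_add_sub_pow_four_le {ι : Type*} [Fintype ι] (G H : ι → ℝ) {C : ℝ} (hC : 0 ≤ C)
    (hG : 𝔼 i, G i ^ 4 ≤ 64 * C * (𝔼 i, G i ^ 2) ^ 2)
    (hH : 𝔼 i, H i ^ 4 ≤ C * (𝔼 i, H i ^ 2) ^ 2) :
    𝔼 i, ((G i + H i) ^ 4 + (G i - H i) ^ 4) / 2 ≤
      64 * C * (𝔼 i, ((G i + H i) ^ 2 + (G i - H i) ^ 2) / 2) ^ 2 := by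
  have h4 : ∀ i, ((G i + H i) ^ 4 + (G i - H i) ^ 4) / 2 =
      G i ^ 4 + 6 * (G i ^ 2 * H i ^ 2) + H i ^ 4 := fun i => by ring
  have h2 : ∀ i, ((G i + H i) ^ 2 + (G i - H i) ^ 2) / 2 = G i ^ 2 + H i ^ 2 := fun i => by ring
  simp only [h4, h2, expect_add_distrib, ← mul_expect]
  have hcs := expect_mul_sq_le_sq_mul_sq univ (fun i => G i ^ 2) (H · ^ 2)
  simp only [← pow_mul] at hcs
  set a := 𝔼 i, G i ^ 2
  set b := 𝔼 i, H i ^ 2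
  set t := 𝔼 i, G i ^ 2 * H i ^ 2
  have ha : 0 ≤ a := expect_nonneg fun i _ => sq_nonneg _
  have hb : 0 ≤ b := expect_nonneg fun i _ => sq_nonneg _
  have ht : 0 ≤ t := expect_nonneg fun i _ => by positivity
  have hP : 0 ≤ 𝔼 i, G i ^ 4 := expect_nonneg fun i _ => by positivity
  have hQ : 0 ≤ 𝔼 i, H i ^ 4 := expect_nonneg fun i _ => by positivity
  have ht_le : t ≤ 8 * C * (a * b) := by
    refine (pow_le_pow_iff_left₀ ht (by positivity) two_ne_zero).mp ?_
    calc t ^ 2 ≤ (64 * C * a ^ 2) * (C * b ^ 2) := hcs.trans (mul_le_mul hG hH hQ (by positivity))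
      _ = (8 * C * (a * b)) ^ 2 := by ring
  -- the cross term costs `6 * 8 * C a b ≤ 2 * 64 * C a b`, the room left by `64 * C * (a + b) ^ 2`
  nlinarith [mul_nonneg hC (mul_nonneg ha hb), mul_nonneg hC (sq_nonneg b)]

theorem expect_signEval_pow_four_le (n : ℕ) :
    ∀ (r : ℕ) (f : MvPolynomial (Fin n) ℝ), f.totalDegree ≤ r →
      𝔼 ε, signEval f ε ^ 4 ≤ 64 ^ r * (𝔼 ε, signEval f ε ^ 2) ^ 2 := by
  induction n with
  | zero =>
    intro r f _
    exact expect_pow_four_le_of_forall_eq (fun ε => congrArg (signEval f) (Subsingleton.elim ε 0))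
      (one_le_pow₀ (by norm_num))
  | succ n ih =>
    rintro (_ | r) f hf
    · rw [totalDegree_eq_zero_iff_eq_C.mp (Nat.le_zero.mp hf)]
      exact expect_pow_four_le_of_forall_eq (fun ε => eval_C _) le_rfl
    · have hg := ih (r + 1) _ ((totalDegree_evenCoeffSum_finSuccEquiv_le f).trans hf)
      have hh := ih r _ ((totalDegree_oddCoeffSum_finSuccEquiv_le f).trans (by omega))
      rw [pow_succ'] at hg ⊢
      rw [expect_fin_succ_bool, expect_fin_succ_bool]
      simp only [signEval_cons_true, signEval_cons_false]
      exact expect_add_sub_pow_four_le _ _ (by positivity) hg hh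

theorem bourgain_hypercontractivity
    (n r : ℕ) (f : MvPolynomial (Fin n) ℝ) (hf : f.totalDegree ≤ r) :
    (∑ ε : Fin n → Bool,
        (MvPolynomial.eval (fun i => if ε i then (1 : ℝ) else -1) f) ^ 4) / 2 ^ n ≤
      2 ^ (6 * r) *
        ((∑ ε : Fin n → Bool,
            (MvPolynomial.eval (fun i => if ε i then (1 : ℝ) else -1) f) ^ 2) / 2 ^ n) ^ 2 := by
  have h := expect_signEval_pow_four_le n r f hf
  simp only [Fintype.expect_eq_sum_div_card, Fintype.card_pi, Fintype.card_bool, prod_const,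
    card_univ, Fintype.card_fin, Nat.cast_pow, Nat.cast_ofNat] at h
  rwa [pow_mul, show (2 : ℝ) ^ 6 = 64 by norm_num]
end
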